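/- arXiv:2605.23671 — 11 statements merged into one kernel-verified Lean document; each statement's English description precedes it below -/
import Mathlib

section
/- The L-ESM subproblem at base price w⁰ has an optimal solution, and this optimal solution is unique: the minimizing vector (p, p⁺, p⁻, x) over the feasible set is the same for every minimizer. (Uniqueness of p and x follows from strict convexity in those variables, and uniqueness of p⁺, p⁻ from w⁺ > w⁻ together with the balance constraint.) -/
open Finset

variable {U : Type*} [Fintype U]

/-- A point `(p, p⁺, p⁻, x)` is feasible for the L-ESM subproblem:
power balance, generator bounds, and nonnegativity of grid trades. -/
def Feasible (D pbar : U → ℝ) (p pp pm x : U → ℝ) : Prop :=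
  ∀ m : U, D m + x m + pm m = p m + pp m ∧
    0 ≤ p m ∧ p m ≤ pbar m ∧ 0 ≤ pp m ∧ 0 ≤ pm m

/-- Objective of the L-ESM subproblem at base price `w0`. -/
noncomputable def Objective (c b : U → ℝ) (wplus wminus a w0 : ℝ)
    (p pp pm x : U → ℝ) : ℝ :=
  (∑ m : U, (c m / 2 * (p m) ^ 2 + b m * p m + wplus * pp m
      - wminus * pm m - w0 * x m))
    + a / 2 * ∑ m : U, (x m) ^ 2 + a / 2 * (∑ m : U, x m) ^ 2

/-- `(p, p⁺, p⁻, x)` is an optimal solution of the L-ESM subproblem. -/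
noncomputable def IsOptimal (c b D pbar : U → ℝ) (wplus wminus a w0 : ℝ)
    (p pp pm x : U → ℝ) : Prop :=
  Feasible D pbar p pp pm x ∧
    ∀ q qp qm y : U → ℝ, Feasible D pbar q qp qm y →
      Objective c b wplus wminus a w0 p pp pm x ≤
        Objective c b wplus wminus a w0 q qp qm y


/-- Reduced objective after eliminating `p⁺, p⁻`. -/
noncomputable def Gred (c b D : U → ℝ) (wplus wminus a w0 : ℝ) (p x : U → ℝ) : ℝ :=
  (∑ m : U, (c m / 2 * (p m) ^ 2 + b m * p m
      + wplus * max (D m + x m - p m) 0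
      - wminus * max (-(D m + x m - p m)) 0 - w0 * x m))
    + a / 2 * ∑ m : U, (x m) ^ 2 + a / 2 * (∑ m : U, x m) ^ 2

lemma max_neg_eq (s : ℝ) : max (-s) 0 = max s 0 - s := by
  rcases le_total s 0 with h | h
  · rw [max_eq_left (by linarith), max_eq_right h]; ring
  · rw [max_eq_right (by linarith), max_eq_left h]; ring

lemma hfun_eq (wplus wminus s : ℝ) :
    wplus * max s 0 - wminus * max (-s) 0
      = (wplus + wminus) / 2 * s + (wplus - wminus) / 2 * |s| := by
  rcases le_total s 0 with h | h
  · rw [abs_of_nonpos h, max_eq_right h, max_eq_left (neg_nonneg.2 h)]; ring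
  · rw [abs_of_nonneg h, max_eq_left h, max_eq_right (neg_nonpos.2 h)]; ring

/-- Decomposition of the objective into reduced objective plus a nonnegative slack. -/
lemma objective_decomp (c b D pbar : U → ℝ) (wplus wminus a w0 : ℝ)
    (p pp pm x : U → ℝ) (hf : Feasible D pbar p pp pm x) :
    Objective c b wplus wminus a w0 p pp pm x
      = Gred c b D wplus wminus a w0 p x
        + (wplus - wminus) * ∑ m : U, (pp m - max (D m + x m - p m) 0) := by
  have key : ∀ m : U,
      c m / 2 * (p m) ^ 2 + b m * p m + wplus * pp m - wminus * pm m - w0 * x m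
        = (c m / 2 * (p m) ^ 2 + b m * p m
            + wplus * max (D m + x m - p m) 0
            - wminus * max (-(D m + x m - p m)) 0 - w0 * x m)
          + (wplus - wminus) * (pp m - max (D m + x m - p m) 0) := by
    intro m
    obtain ⟨hbal, _, _, _, _⟩ := hf m
    have h1 : pm m = pp m - (D m + x m - p m) := by linarith
    rw [h1, max_neg_eq]; ring
  have h1 : (∑ m : U, (c m / 2 * (p m) ^ 2 + b m * p m + wplus * pp m
      - wminus * pm m - w0 * x m))
      = (∑ m : U, (c m / 2 * (p m) ^ 2 + b m * p m
            + wplus * max (D m + x m - p m) 0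
            - wminus * max (-(D m + x m - p m)) 0 - w0 * x m))
        + ∑ m : U, (wplus - wminus) * (pp m - max (D m + x m - p m) 0) := by
    rw [← Finset.sum_add_distrib]
    exact Finset.sum_congr rfl fun m _ => key m
  have h2 : (wplus - wminus) * ∑ m : U, (pp m - max (D m + x m - p m) 0)
      = ∑ m : U, (wplus - wminus) * (pp m - max (D m + x m - p m) 0) :=
    Finset.mul_sum _ _ _
  unfold Objective Gred
  linarith

lemma slack_nonneg (D pbar : U → ℝ) (p pp pm x : U → ℝ)
    (hf : Feasible D pbar p pp pm x) (m : U) :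
    0 ≤ pp m - max (D m + x m - p m) 0 := by
  obtain ⟨hbal, _, _, hpp, hpm⟩ := hf m
  have : max (D m + x m - p m) 0 ≤ pp m := max_le (by linarith) hpp
  linarith

/-- The canonical completion of `(p, x)` to a feasible point. -/
lemma feasible_completion (D pbar : U → ℝ) (p x : U → ℝ)
    (hp : ∀ m, 0 ≤ p m ∧ p m ≤ pbar m) :
    Feasible D pbar p (fun m => max (D m + x m - p m) 0)
      (fun m => max (-(D m + x m - p m)) 0) x := by
  intro m
  refine ⟨?_, (hp m).1, (hp m).2, le_max_right _ _, le_max_right _ _⟩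
  have := max_neg_eq (D m + x m - p m)
  dsimp only
  linarith

lemma objective_of_completion (c b D pbar : U → ℝ) (wplus wminus a w0 : ℝ)
    (p x : U → ℝ) (hp : ∀ m, 0 ≤ p m ∧ p m ≤ pbar m) :
    Objective c b wplus wminus a w0 p (fun m => max (D m + x m - p m) 0)
      (fun m => max (-(D m + x m - p m)) 0) x
      = Gred c b D wplus wminus a w0 p x := by
  rw [objective_decomp c b D pbar wplus wminus a w0 _ _ _ _
    (feasible_completion D pbar p x hp)]
  simp

/-- Coercivity: lower bound on the reduced objective. -/
lemma Gred_lower (c b D pbar : U → ℝ) (wplus wminus a w0 : ℝ)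
    (hc : ∀ m, 0 < c m) (hb : ∀ m, 0 < b m) (hbw : ∀ m, b m < wminus)
    (hw : wminus < wplus) (ha : 0 < a)
    (p x : U → ℝ) (hp : ∀ m, 0 ≤ p m ∧ p m ≤ pbar m) :
    (∑ m : U, (a / 2 * (x m) ^ 2 - (wminus + |w0|) * |x m|
        - wminus * (|D m| + pbar m)))
      ≤ Gred c b D wplus wminus a w0 p x := by
  have key : ∀ m : U,
      a / 2 * (x m) ^ 2 - (wminus + |w0|) * |x m| - wminus * (|D m| + pbar m)
        ≤ (c m / 2 * (p m) ^ 2 + b m * p m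
            + wplus * max (D m + x m - p m) 0
            - wminus * max (-(D m + x m - p m)) 0 - w0 * x m)
          + a / 2 * (x m) ^ 2 := by
    intro m
    have hwm' : 0 < wminus := lt_of_lt_of_le (hb m) (le_of_lt (hbw m))
    have h1 : 0 ≤ c m / 2 * (p m) ^ 2 + b m * p m := by
      have := (hp m).1; have := (hc m).le; have := (hb m).le; positivity
    have h2 : 0 ≤ wplus * max (D m + x m - p m) 0 :=
      mul_nonneg (by linarith [hbw m, hb m]) (le_max_right _ _)
    have h3 : max (-(D m + x m - p m)) 0 ≤ |x m| + |D m| + pbar m := by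
      apply max_le
      · have := (hp m).2
        have := le_abs_self (x m); have := neg_abs_le (x m)
        have := le_abs_self (D m); have := neg_abs_le (D m)
        linarith
      · have := abs_nonneg (x m); have := abs_nonneg (D m)
        have := le_trans (hp m).1 (hp m).2
        linarith
    have h4 : wminus * max (-(D m + x m - p m)) 0 ≤ wminus * (|x m| + |D m| + pbar m) :=
      mul_le_mul_of_nonneg_left h3 hwm'.le
    have h5 : w0 * x m ≤ |w0| * |x m| := by
      rw [← abs_mul]; exact le_abs_self _
    nlinarith
  have hsum := Finset.sum_le_sum (fun m (_ : m ∈ Finset.univ) => key m)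
  rw [Finset.sum_add_distrib] at hsum
  have h6 : 0 ≤ a / 2 * (∑ m : U, x m) ^ 2 := by positivity
  have h7 : (∑ m : U, a / 2 * (x m) ^ 2) = a / 2 * ∑ m : U, (x m) ^ 2 :=
    (Finset.mul_sum _ _ _).symm
  unfold Gred
  linarith

/-- Strict midpoint convexity of the reduced objective. -/
lemma Gred_midpoint (c b D : U → ℝ) (wplus wminus a w0 : ℝ)
    (hwm : 0 < wminus) (hw : wminus < wplus) (ha : 0 < a)
    (p1 x1 p2 x2 : U → ℝ) :
    Gred c b D wplus wminus a w0 (fun m => (p1 m + p2 m) / 2)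
        (fun m => (x1 m + x2 m) / 2)
      ≤ (Gred c b D wplus wminus a w0 p1 x1 + Gred c b D wplus wminus a w0 p2 x2) / 2
        - ∑ m : U, (c m / 8 * (p1 m - p2 m) ^ 2)
        - a / 8 * ∑ m : U, (x1 m - x2 m) ^ 2 := by
  have key : ∀ m : U,
      (c m / 2 * ((p1 m + p2 m) / 2) ^ 2 + b m * ((p1 m + p2 m) / 2)
          + wplus * max (D m + (x1 m + x2 m) / 2 - (p1 m + p2 m) / 2) 0
          - wminus * max (-(D m + (x1 m + x2 m) / 2 - (p1 m + p2 m) / 2)) 0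
          - w0 * ((x1 m + x2 m) / 2))
        + a / 2 * ((x1 m + x2 m) / 2) ^ 2
      ≤ ((c m / 2 * (p1 m) ^ 2 + b m * p1 m
            + wplus * max (D m + x1 m - p1 m) 0
            - wminus * max (-(D m + x1 m - p1 m)) 0 - w0 * x1 m)
          + a / 2 * (x1 m) ^ 2
        + ((c m / 2 * (p2 m) ^ 2 + b m * p2 m
            + wplus * max (D m + x2 m - p2 m) 0
            - wminus * max (-(D m + x2 m - p2 m)) 0 - w0 * x2 m)
          + a / 2 * (x2 m) ^ 2)) / 2
        - c m / 8 * (p1 m - p2 m) ^ 2 - a / 8 * (x1 m - x2 m) ^ 2 := by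
    intro m
    set s1 := D m + x1 m - p1 m with hs1
    set s2 := D m + x2 m - p2 m with hs2
    have hmid : D m + (x1 m + x2 m) / 2 - (p1 m + p2 m) / 2 = (s1 + s2) / 2 := by
      rw [hs1, hs2]; ring
    rw [hmid]
    have e1 := hfun_eq wplus wminus ((s1 + s2) / 2)
    have e2 := hfun_eq wplus wminus s1
    have e3 := hfun_eq wplus wminus s2
    have habs : |(s1 + s2) / 2| ≤ |s1| / 2 + |s2| / 2 := by
      have := abs_add_le s1 s2
      calc |(s1 + s2) / 2| = |s1 + s2| / 2 := by rw [abs_div]; simp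
        _ ≤ (|s1| + |s2|) / 2 := by linarith
        _ = |s1| / 2 + |s2| / 2 := by ring
    have hprod := mul_le_mul_of_nonneg_left habs
      (by linarith : (0:ℝ) ≤ (wplus - wminus) / 2)
    nlinarith [e1, e2, e3, hprod]
  have hsum := Finset.sum_le_sum (fun m (_ : m ∈ Finset.univ) => key m)
  rw [Finset.sum_add_distrib] at hsum
  have e1 : ∀ (y : U → ℝ), (∑ m : U, a / 2 * (y m) ^ 2) = a / 2 * ∑ m : U, (y m) ^ 2 :=
    fun y => (Finset.mul_sum _ _ _).symm
  rw [e1] at hsum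
  have e2 : (∑ m : U, (((c m / 2 * (p1 m) ^ 2 + b m * p1 m
            + wplus * max (D m + x1 m - p1 m) 0
            - wminus * max (-(D m + x1 m - p1 m)) 0 - w0 * x1 m)
          + a / 2 * (x1 m) ^ 2
        + ((c m / 2 * (p2 m) ^ 2 + b m * p2 m
            + wplus * max (D m + x2 m - p2 m) 0
            - wminus * max (-(D m + x2 m - p2 m)) 0 - w0 * x2 m)
          + a / 2 * (x2 m) ^ 2)) / 2
        - c m / 8 * (p1 m - p2 m) ^ 2 - a / 8 * (x1 m - x2 m) ^ 2))
      = ((∑ m : U, (c m / 2 * (p1 m) ^ 2 + b m * p1 m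
            + wplus * max (D m + x1 m - p1 m) 0
            - wminus * max (-(D m + x1 m - p1 m)) 0 - w0 * x1 m))
          + a / 2 * ∑ m : U, (x1 m) ^ 2
        + ((∑ m : U, (c m / 2 * (p2 m) ^ 2 + b m * p2 m
            + wplus * max (D m + x2 m - p2 m) 0
            - wminus * max (-(D m + x2 m - p2 m)) 0 - w0 * x2 m))
          + a / 2 * ∑ m : U, (x2 m) ^ 2)) / 2
        - (∑ m : U, (c m / 8 * (p1 m - p2 m) ^ 2))
        - a / 8 * ∑ m : U, (x1 m - x2 m) ^ 2 := by
    rw [Finset.sum_sub_distrib, Finset.sum_sub_distrib, ← Finset.sum_div,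
      Finset.sum_add_distrib, Finset.sum_add_distrib, Finset.sum_add_distrib,
      e1 x1, e1 x2]
    have e3 : (∑ m : U, a / 8 * (x1 m - x2 m) ^ 2) = a / 8 * ∑ m : U, (x1 m - x2 m) ^ 2 :=
      (Finset.mul_sum _ _ _).symm
    rw [e3]
  rw [e2] at hsum
  -- the coupling term
  have hsx : (∑ m : U, (x1 m + x2 m) / 2) = ((∑ m : U, x1 m) + ∑ m : U, x2 m) / 2 := by
    rw [← Finset.sum_div, Finset.sum_add_distrib]
  have hcoup : a / 2 * (∑ m : U, (x1 m + x2 m) / 2) ^ 2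
      ≤ (a / 2 * (∑ m : U, x1 m) ^ 2 + a / 2 * (∑ m : U, x2 m) ^ 2) / 2 := by
    rw [hsx]
    nlinarith [sq_nonneg ((∑ m : U, x1 m) - ∑ m : U, x2 m), ha]
  unfold Gred
  linarith

lemma quad_lb (a L t : ℝ) (ha : 0 < a) :
    -(L ^ 2 / (2 * a)) ≤ a / 2 * t ^ 2 - L * t := by
  have h2a : (0:ℝ) < 2 * a := by linarith
  have hid : a / 2 * t ^ 2 - L * t + L ^ 2 / (2 * a) = (a * t - L) ^ 2 / (2 * a) := by
    field_simp; ring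
  have := div_nonneg (sq_nonneg (a * t - L)) h2a.le
  linarith

lemma quad_ub (a L C t : ℝ) (ha : 0 < a) (hL : 0 ≤ L) (hC : 0 ≤ C) (ht : 0 ≤ t)
    (h : a / 2 * t ^ 2 - L * t ≤ C) : t ≤ max 1 (2 * (C + L) / a) := by
  by_contra hcon
  push_neg at hcon
  have ht1 : 1 < t := lt_of_le_of_lt (le_max_left _ _) hcon
  have ht2 : 2 * (C + L) / a < t := lt_of_le_of_lt (le_max_right _ _) hcon
  have hat : 2 * (C + L) < a * t := by
    rw [div_lt_iff₀ ha] at ht2; linarith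
  nlinarith [mul_lt_mul_of_pos_right hat (by linarith : (0:ℝ) < t)]

lemma Gred_continuous (c b D : U → ℝ) (wplus wminus a w0 : ℝ) :
    Continuous (fun z : (U → ℝ) × (U → ℝ) =>
      Gred c b D wplus wminus a w0 z.1 z.2) := by
  unfold Gred
  fun_prop

/-- Existence of a minimizer of the reduced objective. -/
lemma exists_min_Gred [Nonempty U] (c b D pbar : U → ℝ) (wplus wminus a w0 : ℝ)
    (hc : ∀ m, 0 < c m) (hpbar : ∀ m, 0 ≤ pbar m)
    (hb : ∀ m, 0 < b m) (hbw : ∀ m, b m < wminus)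
    (hw : wminus < wplus) (ha : 0 < a) :
    ∃ z : (U → ℝ) × (U → ℝ), (∀ m, 0 ≤ z.1 m ∧ z.1 m ≤ pbar m) ∧
      ∀ q y : U → ℝ, (∀ m, 0 ≤ q m ∧ q m ≤ pbar m) →
        Gred c b D wplus wminus a w0 z.1 z.2 ≤ Gred c b D wplus wminus a w0 q y := by
  classical
  set L : ℝ := wminus + |w0| with hL
  have hwm : 0 < wminus := (hb (Classical.arbitrary U)).trans (hbw (Classical.arbitrary U))
  have hL0 : 0 ≤ L := by have := abs_nonneg w0; rw [hL]; linarith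
  set M : ℝ := ∑ m : U, wminus * (|D m| + pbar m) with hM
  set V : ℝ := Gred c b D wplus wminus a w0 (fun _ => 0) (fun _ => 0) with hV
  set n : ℕ := Fintype.card U with hn
  set Lq : ℝ := L ^ 2 / (2 * a) with hLq
  have hLq0 : 0 ≤ Lq := by rw [hLq]; positivity
  set C1 : ℝ := |V + M| + n * Lq with hC1
  have hC10 : 0 ≤ C1 := by rw [hC1]; positivity
  set R : ℝ := max 1 (2 * (C1 + L) / a) with hR
  have hR1 : (1:ℝ) ≤ R := le_max_left _ _
  -- key bound: any box point with value ≤ V has all |x k| ≤ R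
  have hbound : ∀ p x : U → ℝ, (∀ m, 0 ≤ p m ∧ p m ≤ pbar m) →
      Gred c b D wplus wminus a w0 p x ≤ V → ∀ k, |x k| ≤ R := by
    intro p x hp hle k
    have hlow := Gred_lower c b D pbar wplus wminus a w0 hc hb hbw hw ha p x hp
    have hsplit : (∑ m : U, (a / 2 * (x m) ^ 2 - L * |x m| - wminus * (|D m| + pbar m)))
        = (∑ m : U, (a / 2 * (x m) ^ 2 - L * |x m|)) - M := by
      rw [hM, ← Finset.sum_sub_distrib]
    have hsum : (∑ m : U, (a / 2 * (x m) ^ 2 - L * |x m|)) ≤ V + M := by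
      rw [hsplit] at hlow; linarith
    -- lower bound on the other terms
    have hterm : ∀ m : U, -(Lq) ≤ a / 2 * (x m) ^ 2 - L * |x m| := fun m =>
      quad_lb a L (|x m|) ha |>.trans_eq (by rw [sq_abs])
    have herase : ((Finset.univ.erase k).card : ℝ) • (-(Lq))
        ≤ ∑ m ∈ Finset.univ.erase k, (a / 2 * (x m) ^ 2 - L * |x m|) := by
      rw [Nat.cast_smul_eq_nsmul]
      exact Finset.card_nsmul_le_sum _ _ _ (fun m _ => hterm m)
    have hcard : ((Finset.univ.erase k).card : ℝ) ≤ n := by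
      exact_mod_cast Finset.card_le_card (Finset.subset_univ _) |>.trans (le_of_eq rfl)
    have hsum_erase : -(n * Lq) ≤ ∑ m ∈ Finset.univ.erase k, (a / 2 * (x m) ^ 2 - L * |x m|) := by
      have : ((Finset.univ.erase k).card : ℝ) • (-(Lq))
          = -(((Finset.univ.erase k).card : ℝ) * Lq) := by
        rw [smul_eq_mul]; ring
      rw [this] at herase
      have : -((n:ℝ) * Lq) ≤ -(((Finset.univ.erase k).card : ℝ) * Lq) := by
        have := mul_le_mul_of_nonneg_right hcard hLq0
        linarith
      linarith
    have hsum_split : (∑ m : U, (a / 2 * (x m) ^ 2 - L * |x m|))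
        = (a / 2 * (x k) ^ 2 - L * |x k|)
          + ∑ m ∈ Finset.univ.erase k, (a / 2 * (x m) ^ 2 - L * |x m|) := by
      rw [← Finset.sum_erase_add Finset.univ _ (Finset.mem_univ k)]; ring
    have htk : a / 2 * (x k) ^ 2 - L * |x k| ≤ C1 := by
      have h1 : a / 2 * (x k) ^ 2 - L * |x k| ≤ V + M + n * Lq := by
        rw [hsum_split] at hsum; linarith
      have : V + M ≤ |V + M| := le_abs_self _
      rw [hC1]; linarith
    have := quad_ub a L C1 (|x k|) ha hL0 hC10 (abs_nonneg _)
      (by rw [sq_abs]; exact htk)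
    rw [hR]; exact this
  -- compact box
  set B : Set ((U → ℝ) × (U → ℝ)) :=
    (Set.univ.pi fun m => Set.Icc 0 (pbar m)) ×ˢ (Set.univ.pi fun _ => Set.Icc (-R) R)
    with hB
  have hBc : IsCompact B :=
    ((isCompact_univ_pi fun m => isCompact_Icc).prod
      (isCompact_univ_pi fun _ => isCompact_Icc))
  have hzero : ((fun _ => (0:ℝ)), (fun _ => (0:ℝ))) ∈ B := by
    rw [hB]
    constructor
    · intro m _; exact ⟨le_refl 0, hpbar m⟩
    · intro m _
      have h0 : (0:ℝ) ≤ R := by linarith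
      exact ⟨(neg_nonpos.mpr h0 : -R ≤ (0:ℝ)), h0⟩
  obtain ⟨z, hzB, hzmin'⟩ := hBc.exists_isMinOn ⟨_, hzero⟩
    ((Gred_continuous c b D wplus wminus a w0).continuousOn)
  have hzmin : ∀ w ∈ B, Gred c b D wplus wminus a w0 z.1 z.2
      ≤ Gred c b D wplus wminus a w0 w.1 w.2 := fun w hw => isMinOn_iff.mp hzmin' w hw
  obtain ⟨hz1, hz2⟩ := hzB
  refine ⟨z, fun m => (hz1 m (Set.mem_univ m) : _), ?_⟩
  intro q y hq
  by_cases hqB : (q, y) ∈ B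
  · exact hzmin (q, y) hqB
  · -- outside the box: value exceeds V
    have hzV : Gred c b D wplus wminus a w0 z.1 z.2 ≤ V := by
      have h := hzmin (fun _ => 0, fun _ => 0) hzero
      simp only at h
      rw [hV]
      exact h
    have : ¬ (Gred c b D wplus wminus a w0 q y ≤ V) := by
      intro hle
      apply hqB
      rw [hB]
      refine ⟨fun m _ => ⟨(hq m).1, (hq m).2⟩, fun m _ => ?_⟩
      have := hbound q y hq hle m
      exact ⟨neg_le_of_abs_le this, le_of_abs_le this⟩
    push_neg at this
    linarith

/-- Uniqueness of the reduced minimizer via strict convexity. -/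
lemma min_Gred_unique (c b D pbar : U → ℝ) (wplus wminus a w0 : ℝ)
    (hc : ∀ m, 0 < c m) (hwm : 0 < wminus) (hw : wminus < wplus) (ha : 0 < a)
    (p1 x1 p2 x2 : U → ℝ)
    (hp1 : ∀ m, 0 ≤ p1 m ∧ p1 m ≤ pbar m) (hp2 : ∀ m, 0 ≤ p2 m ∧ p2 m ≤ pbar m)
    (hmin1 : ∀ q y : U → ℝ, (∀ m, 0 ≤ q m ∧ q m ≤ pbar m) →
      Gred c b D wplus wminus a w0 p1 x1 ≤ Gred c b D wplus wminus a w0 q y)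
    (hmin2 : ∀ q y : U → ℝ, (∀ m, 0 ≤ q m ∧ q m ≤ pbar m) →
      Gred c b D wplus wminus a w0 p2 x2 ≤ Gred c b D wplus wminus a w0 q y) :
    p1 = p2 ∧ x1 = x2 := by
  have heq : Gred c b D wplus wminus a w0 p1 x1 = Gred c b D wplus wminus a w0 p2 x2 :=
    le_antisymm (hmin1 p2 x2 hp2) (hmin2 p1 x1 hp1)
  have hmidbox : ∀ m, 0 ≤ (p1 m + p2 m) / 2 ∧ (p1 m + p2 m) / 2 ≤ pbar m := by
    intro m
    obtain ⟨h1, h2⟩ := hp1 m; obtain ⟨h3, h4⟩ := hp2 m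
    constructor <;> [linarith; linarith]
  have h1 := hmin1 (fun m => (p1 m + p2 m) / 2) (fun m => (x1 m + x2 m) / 2) hmidbox
  have h2 := Gred_midpoint c b D wplus wminus a w0 hwm hw ha p1 x1 p2 x2
  have hsum0 : (∑ m : U, (c m / 8 * (p1 m - p2 m) ^ 2))
      + a / 8 * ∑ m : U, (x1 m - x2 m) ^ 2 ≤ 0 := by linarith
  have hs1 : (0:ℝ) ≤ ∑ m : U, (c m / 8 * (p1 m - p2 m) ^ 2) :=
    Finset.sum_nonneg fun m _ => by have := (hc m).le; positivity
  have hs2 : (0:ℝ) ≤ ∑ m : U, (x1 m - x2 m) ^ 2 :=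
    Finset.sum_nonneg fun m _ => sq_nonneg _
  have hz1 : (∑ m : U, (c m / 8 * (p1 m - p2 m) ^ 2)) = 0 := by nlinarith
  have hz2 : (∑ m : U, (x1 m - x2 m) ^ 2) = 0 := by nlinarith
  constructor
  · funext m
    have := (Finset.sum_eq_zero_iff_of_nonneg
      (fun m _ => by have := (hc m).le; positivity)).mp hz1 m (Finset.mem_univ m)
    have hcm := hc m
    have : (p1 m - p2 m) ^ 2 = 0 := by
      by_contra hne
      have h0 : 0 < (p1 m - p2 m) ^ 2 := lt_of_le_of_ne (sq_nonneg _) (Ne.symm hne)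
      nlinarith
    have := pow_eq_zero_iff (n := 2) (by norm_num) |>.mp this
    linarith [sub_eq_zero.mp this]
  · funext m
    have := (Finset.sum_eq_zero_iff_of_nonneg
      (fun m _ => sq_nonneg (x1 m - x2 m))).mp hz2 m (Finset.mem_univ m)
    have := pow_eq_zero_iff (n := 2) (by norm_num) |>.mp this
    linarith [sub_eq_zero.mp this]


/-- the L-ESM subproblem at base price `w0` has a unique optimal
solution `(p, p⁺, p⁻, x)`. -/
theorem lesm_existsUnique_optimal [Nonempty U]
    (c b D pbar : U → ℝ) (wplus wminus a w0 : ℝ)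
    (hc : ∀ m, 0 < c m) (hpbar : ∀ m, 0 ≤ pbar m)
    (hb : ∀ m, 0 < b m) (hbw : ∀ m, b m < wminus)
    (hw : wminus < wplus) (ha : 0 < a) :
    ∃! s : (U → ℝ) × (U → ℝ) × (U → ℝ) × (U → ℝ),
      IsOptimal c b D pbar wplus wminus a w0 s.1 s.2.1 s.2.2.1 s.2.2.2 := by
  classical
  have hwm : 0 < wminus := (hb (Classical.arbitrary U)).trans (hbw (Classical.arbitrary U))
  obtain ⟨z, hzbox, hzmin⟩ :=
    exists_min_Gred c b D pbar wplus wminus a w0 hc hpbar hb hbw hw ha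
  set pstar : U → ℝ := z.1 with hpstar
  set xstar : U → ℝ := z.2 with hxstar
  set ppstar : U → ℝ := fun m => max (D m + xstar m - pstar m) 0 with hppstar
  set pmstar : U → ℝ := fun m => max (-(D m + xstar m - pstar m)) 0 with hpmstar
  have hfeas : Feasible D pbar pstar ppstar pmstar xstar :=
    feasible_completion D pbar pstar xstar hzbox
  have hobj_eq : Objective c b wplus wminus a w0 pstar ppstar pmstar xstar
      = Gred c b D wplus wminus a w0 pstar xstar :=
    objective_of_completion c b D pbar wplus wminus a w0 pstar xstar hzbox
  have hopt : IsOptimal c b D pbar wplus wminus a w0 pstar ppstar pmstar xstar := by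
    refine ⟨hfeas, fun q qp qm y hfq => ?_⟩
    have hdec := objective_decomp c b D pbar wplus wminus a w0 q qp qm y hfq
    have hslack : 0 ≤ ∑ m : U, (qp m - max (D m + y m - q m) 0) :=
      Finset.sum_nonneg fun m _ => slack_nonneg D pbar q qp qm y hfq m
    have hqbox : ∀ m, 0 ≤ q m ∧ q m ≤ pbar m := fun m =>
      ⟨(hfq m).2.1, (hfq m).2.2.1⟩
    have h1 := hzmin q y hqbox
    have h2 : 0 ≤ (wplus - wminus) * ∑ m : U, (qp m - max (D m + y m - q m) 0) :=
      mul_nonneg (by linarith) hslack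
    rw [hobj_eq, hdec]
    linarith
  refine ⟨(pstar, ppstar, pmstar, xstar), hopt, ?_⟩
  rintro ⟨p', pp', pm', x'⟩ ⟨hf', hopt'⟩
  simp only at hf' hopt' ⊢
  -- objective values agree
  have hoe : Objective c b wplus wminus a w0 p' pp' pm' x'
      = Objective c b wplus wminus a w0 pstar ppstar pmstar xstar :=
    le_antisymm (hopt' pstar ppstar pmstar xstar hfeas)
      (hopt.2 p' pp' pm' x' hf')
  have hdec' := objective_decomp c b D pbar wplus wminus a w0 p' pp' pm' x' hf'
  have hslack' : 0 ≤ ∑ m : U, (pp' m - max (D m + x' m - p' m) 0) :=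
    Finset.sum_nonneg fun m _ => slack_nonneg D pbar p' pp' pm' x' hf' m
  have hp'box : ∀ m, 0 ≤ p' m ∧ p' m ≤ pbar m := fun m =>
    ⟨(hf' m).2.1, (hf' m).2.2.1⟩
  -- (p', x') is also a minimizer of the reduced problem
  have hGle : Gred c b D wplus wminus a w0 p' x'
      ≤ Gred c b D wplus wminus a w0 pstar xstar := by
    have h2 : 0 ≤ (wplus - wminus) * ∑ m : U, (pp' m - max (D m + x' m - p' m) 0) :=
      mul_nonneg (by linarith) hslack'
    rw [← hobj_eq, ← hoe, hdec']
    linarith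
  have hmin' : ∀ q y : U → ℝ, (∀ m, 0 ≤ q m ∧ q m ≤ pbar m) →
      Gred c b D wplus wminus a w0 p' x' ≤ Gred c b D wplus wminus a w0 q y :=
    fun q y hq => le_trans hGle (hzmin q y hq)
  obtain ⟨hpeq, hxeq⟩ := min_Gred_unique c b D pbar wplus wminus a w0 hc hwm hw ha
    pstar xstar p' x' hzbox hp'box hzmin hmin'
  -- slack must vanish
  have hGeq : Gred c b D wplus wminus a w0 p' x'
      = Gred c b D wplus wminus a w0 pstar xstar := by rw [hpeq, hxeq]
  have hslack0 : (∑ m : U, (pp' m - max (D m + x' m - p' m) 0)) = 0 := by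
    have : (wplus - wminus) * ∑ m : U, (pp' m - max (D m + x' m - p' m) 0) = 0 := by
      rw [hdec', hGeq, ← hobj_eq] at hoe
      linarith
    have hne : wplus - wminus ≠ 0 := by linarith
    exact (mul_eq_zero.mp this).resolve_left hne
  have hterm0 : ∀ m : U, pp' m - max (D m + x' m - p' m) 0 = 0 := by
    intro m
    exact (Finset.sum_eq_zero_iff_of_nonneg
      (fun m _ => slack_nonneg D pbar p' pp' pm' x' hf' m)).mp hslack0 m (Finset.mem_univ m)
  have hpp' : pp' = ppstar := by
    funext m
    have := hterm0 m
    rw [hppstar, hpeq, hxeq]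
    dsimp only
    linarith
  have hpm' : pm' = pmstar := by
    funext m
    obtain ⟨hbal, _, _, _, _⟩ := hf' m
    have h1 : pm' m = pp' m - (D m + x' m - p' m) := by linarith
    have h2 := hterm0 m
    have h3 := max_neg_eq (D m + x' m - p' m)
    rw [hpmstar, hpeq, hxeq]
    dsimp only
    linarith
  simp only [Prod.mk.injEq]
  exact ⟨hpeq.symm, hpp', hpm', hxeq.symm⟩
end

section
/- Every optimal solution of the L-ESM subproblem automatically satisfies the complementarity condition p_m⁺ · p_m⁻ = 0 for every m ∈ U; that is, no prosumer simultaneously buys from and sells to the main grid at an optimum. -/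
open Finset

variable {U : Type*} [Fintype U]

/-!
If a prosumer both buys and sells at an optimum, cancel `δ = min p⁺_m p⁻_m > 0` of each trade:
the power balance is unchanged, and since the objective is affine in `(p⁺, p⁻)` the cost drops
by `(w⁺ - w⁻) δ > 0`, contradicting optimality.
-/

theorem objective_add_trades (c b : U → ℝ) (wplus wminus a w0 : ℝ) (p pp pm x u v : U → ℝ) :
    Objective c b wplus wminus a w0 p (pp + u) (pm + v) x =
      Objective c b wplus wminus a w0 p pp pm x + (wplus * ∑ m, u m - wminus * ∑ m, v m) := by
  have hsum : ∑ m, (c m / 2 * p m ^ 2 + b m * p m + wplus * (pp + u) m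
      - wminus * (pm + v) m - w0 * x m) =
      ∑ m, (c m / 2 * p m ^ 2 + b m * p m + wplus * pp m - wminus * pm m - w0 * x m) +
        (wplus * ∑ m, u m - wminus * ∑ m, v m) := by
    rw [mul_sum, mul_sum, ← sum_sub_distrib, ← sum_add_distrib]
    exact sum_congr rfl fun m _ => by simp only [Pi.add_apply]; ring
  rw [Objective, Objective, hsum]
  ring

omit [Fintype U] in
theorem Feasible.sub_single [DecidableEq U] {D pbar p pp pm x : U → ℝ}
    (h : Feasible D pbar p pp pm x) {m : U} {δ : ℝ} (hpp : δ ≤ pp m)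
    (hpm : δ ≤ pm m) :
    Feasible D pbar p (pp - Pi.single m δ) (pm - Pi.single m δ) x := by
  intro k
  rcases eq_or_ne k m with rfl | hk
  · obtain ⟨hbal, hp, hpbar, hpp_nonneg, hpm_nonneg⟩ := h k
    simp only [Pi.sub_apply, Pi.single_eq_same]
    exact ⟨by linarith, hp, hpbar, by linarith, by linarith⟩
  · simpa only [Pi.sub_apply, Pi.single_eq_of_ne hk, sub_zero] using h k

theorem objective_sub_single [DecidableEq U] (c b : U → ℝ) (wplus wminus a w0 : ℝ)
    (p pp pm x : U → ℝ) (m : U) (δ : ℝ) :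
    Objective c b wplus wminus a w0 p (pp - Pi.single m δ) (pm - Pi.single m δ) x =
      Objective c b wplus wminus a w0 p pp pm x - (wplus - wminus) * δ := by
  simp only [sub_eq_add_neg pp, sub_eq_add_neg pm, objective_add_trades, Pi.neg_apply,
    sum_neg_distrib, sum_pi_single', mem_univ, if_true]
  ring

theorem lesm_optimal_complementarity_general
    (c b D pbar : U → ℝ) (wplus wminus a w0 : ℝ)
    (hw : wminus < wplus)
    (p pp pm x : U → ℝ)
    (hopt : IsOptimal c b D pbar wplus wminus a w0 p pp pm x) :
    ∀ m : U, pp m * pm m = 0 := by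
  classical
  intro m
  by_contra hne
  obtain ⟨hfeas, hmin⟩ := hopt
  obtain ⟨-, -, -, hpp, hpm⟩ := hfeas m
  obtain ⟨hpp_ne, hpm_ne⟩ := mul_ne_zero_iff.mp hne
  set δ := min (pp m) (pm m)
  have hδ : 0 < δ := lt_min (hpp.lt_of_ne' hpp_ne) (hpm.lt_of_ne' hpm_ne)
  have hle := hmin p _ _ x (hfeas.sub_single (min_le_left (pp m) (pm m)) (min_le_right _ _))
  rw [objective_sub_single] at hle
  linarith [mul_pos (sub_pos.mpr hw) hδ]

/-- every optimal solution satisfies the complementarity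
condition `p⁺_m · p⁻_m = 0` for every prosumer `m`. -/
theorem lesm_optimal_complementarity [Nonempty U]
    (c b D pbar : U → ℝ) (wplus wminus a w0 : ℝ)
    (hc : ∀ m, 0 < c m) (hpbar : ∀ m, 0 ≤ pbar m)
    (hb : ∀ m, 0 < b m) (hbw : ∀ m, b m < wminus)
    (hw : wminus < wplus) (ha : 0 < a)
    (p pp pm x : U → ℝ)
    (hopt : IsOptimal c b D pbar wplus wminus a w0 p pp pm x) :
    ∀ m : U, pp m * pm m = 0 :=
  lesm_optimal_complementarity_general c b D pbar wplus wminus a w0 hw p pp pm x hopt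
end

section
/- Let (p*, p⁺*, p⁻*, x*) be an optimal solution of the L-ESM subproblem and set X* = Σ_{m∈U} x_m*. Then for every prosumer m ∈ U at least one of the following four modes holds: (Mode 1) c_m(x_m* + D_m) + b_m − w⁰ + a·X* + a·x_m* = 0 and p_m* = x_m* + D_m; (Mode 2) w⁺ − w⁰ + a·X* + a·x_m* = 0 and p_m* = min(p̄_m, (w⁺ − b_m)/c_m); (Mode 3) w⁻ − w⁰ + a·X* + a·x_m* = 0 and p_m* = min(p̄_m, (w⁻ − b_m)/c_m); (Mode 4) x_m* = p̄_m − D_m and p_m* = p̄_m. -/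
open Finset

variable {U : Type*} [Fintype U]

/-! The subproblem is a convex quadratic program, so at an optimum the derivative of the objective
along every feasible segment is nonnegative. Apply this to deviations of a single prosumer `m` and
write `λ_m = w⁰ - a X* - a x_m*` for its marginal price of energy: then `w⁻ ≤ λ_m ≤ w⁺`, with
`λ_m = w⁺` if `p⁺_m > 0` and `λ_m = w⁻` if `p⁻_m > 0`, and `p_m*` minimises
`c_m p²/2 + (b_m - λ_m) p` on `[0, p̄_m]`, i.e. `p_m* = min(p̄_m, (λ_m - b_m)/c_m)` since
`b_m < w⁻ ≤ λ_m`. Modes 2 and 3 are the cases `p⁺_m > 0` and `p⁻_m > 0`; otherwise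
`p_m* = x_m* + D_m`, giving mode 1 below capacity and mode 4 at capacity. -/

open Filter Topology

lemma nonneg_of_forall_mul_add_sq_mul_nonneg {B C : ℝ}
    (h : ∀ t : ℝ, 0 < t → t ≤ 1 → 0 ≤ t * B + t ^ 2 * C) : 0 ≤ B := by
  have hlim : Tendsto (fun t : ℝ => B + t * C) (𝓝[>] 0) (𝓝 B) := by
    have : Continuous (fun t : ℝ => B + t * C) := by fun_prop
    simpa using (this.tendsto 0).mono_left nhdsWithin_le_nhds
  refine ge_of_tendsto hlim ?_
  filter_upwards [Ioc_mem_nhdsGT one_pos] with t ⟨ht0, ht1⟩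
  have := h t ht0 ht1
  nlinarith

lemma eq_min_div_of_forall_mul_sub_nonneg {c b w p pbar : ℝ} (hc : 0 < c) (hbw : b < w)
    (hp0 : 0 ≤ p) (hp : p ≤ pbar) (h : ∀ q, 0 ≤ q → q ≤ pbar → 0 ≤ (c * p + b - w) * (q - p)) :
    p = min pbar ((w - b) / c) := by
  have hzero := h 0 le_rfl (hp0.trans hp)
  rcases hp.lt_or_eq with hlt | rfl
  · have hup : 0 ≤ c * p + b - w :=
      nonneg_of_mul_nonneg_left (h pbar (hp0.trans hp) le_rfl) (sub_pos.2 hlt)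
    have hlow : c * p + b - w ≤ 0 := by
      rcases hp0.lt_or_eq with hpos | rfl
      · nlinarith
      · linarith
    have hpw : p = (w - b) / c := by rw [eq_div_iff hc.ne']; linarith
    rw [min_eq_right (hpw ▸ hlt.le), hpw]
  · refine (min_eq_left ?_).symm
    rw [le_div_iff₀ hc]
    rcases hp0.lt_or_eq with hpos | rfl
    · nlinarith
    · linarith

def marginalPrice (a w0 : ℝ) (x : U → ℝ) (m : U) : ℝ :=
  w0 - a * ∑ j, x j - a * x m

def objectiveDeriv (c b : U → ℝ) (wplus wminus a w0 : ℝ) (p x dp dpp dpm dx : U → ℝ) : ℝ :=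
  ∑ j, ((c j * p j + b j) * dp j + wplus * dpp j - wminus * dpm j
    - marginalPrice a w0 x j * dx j)

lemma objective_add_smul (c b : U → ℝ) (wplus wminus a w0 t : ℝ)
    (p pp pm x dp dpp dpm dx : U → ℝ) :
    Objective c b wplus wminus a w0 (p + t • dp) (pp + t • dpp) (pm + t • dpm) (x + t • dx) =
      Objective c b wplus wminus a w0 p pp pm x
        + t * objectiveDeriv c b wplus wminus a w0 p x dp dpp dpm dx
        + t ^ 2 * (∑ j, c j / 2 * dp j ^ 2 + a / 2 * ∑ j, dx j ^ 2 + a / 2 * (∑ j, dx j) ^ 2) := by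
  have hS : ∑ j, (x j + t * dx j) = ∑ j, x j + t * ∑ j, dx j := by
    rw [sum_add_distrib, mul_sum]
  have hlin : ∑ j, (c j / 2 * (p j + t * dp j) ^ 2 + b j * (p j + t * dp j)
        + wplus * (pp j + t * dpp j) - wminus * (pm j + t * dpm j) - w0 * (x j + t * dx j)) =
      ∑ j, (c j / 2 * p j ^ 2 + b j * p j + wplus * pp j - wminus * pm j - w0 * x j)
        + t * ∑ j, ((c j * p j + b j) * dp j + wplus * dpp j - wminus * dpm j - w0 * dx j)
        + t ^ 2 * ∑ j, c j / 2 * dp j ^ 2 := by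
    simp only [mul_sum, ← sum_add_distrib]
    exact sum_congr rfl fun j _ => by ring
  have hsq : ∑ j, (x j + t * dx j) ^ 2 =
      ∑ j, x j ^ 2 + t * ∑ j, 2 * (x j * dx j) + t ^ 2 * ∑ j, dx j ^ 2 := by
    simp only [mul_sum, ← sum_add_distrib]
    exact sum_congr rfl fun j _ => by ring
  have hderiv : objectiveDeriv c b wplus wminus a w0 p x dp dpp dpm dx =
      ∑ j, ((c j * p j + b j) * dp j + wplus * dpp j - wminus * dpm j - w0 * dx j)
        + a * ∑ j, x j * dx j + a * (∑ j, x j) * ∑ j, dx j := by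
    simp only [objectiveDeriv, marginalPrice, mul_sum, ← sum_add_distrib]
    exact sum_congr rfl fun j _ => by ring
  simp only [Objective, Pi.add_apply, Pi.smul_apply, smul_eq_mul]
  rw [hS, hlin, hsq, hderiv, ← mul_sum]
  ring

omit [Fintype U] in
lemma Feasible.add_smul_sub {D pbar p pp pm x q qp qm y : U → ℝ}
    (hz : Feasible D pbar p pp pm x) (hz' : Feasible D pbar q qp qm y) {t : ℝ}
    (ht0 : 0 ≤ t) (ht1 : t ≤ 1) :
    Feasible D pbar (p + t • (q - p)) (pp + t • (qp - pp)) (pm + t • (qm - pm))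
      (x + t • (y - x)) := by
  intro j
  obtain ⟨hbal, hp0, hp1, hpp, hpm⟩ := hz j
  obtain ⟨hbal', hq0, hq1, hqp, hqm⟩ := hz' j
  simp only [Pi.add_apply, Pi.smul_apply, Pi.sub_apply, smul_eq_mul]
  have ht1' : 0 ≤ 1 - t := sub_nonneg.2 ht1
  refine ⟨by linear_combination (1 - t) * hbal + t * hbal', ?_, ?_, ?_, ?_⟩ <;>
    nlinarith [mul_nonneg ht0 ht1']

namespace IsOptimal

variable {c b D pbar : U → ℝ} {wplus wminus a w0 : ℝ} {p pp pm x : U → ℝ}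

lemma objectiveDeriv_nonneg (hopt : IsOptimal c b D pbar wplus wminus a w0 p pp pm x)
    {q qp qm y : U → ℝ} (hz' : Feasible D pbar q qp qm y) :
    0 ≤ objectiveDeriv c b wplus wminus a w0 p x (q - p) (qp - pp) (qm - pm) (y - x) := by
  have hseg := fun t (ht0 : 0 < t) (ht1 : t ≤ 1) =>
    hopt.2 _ _ _ _ (hopt.1.add_smul_sub hz' ht0.le ht1)
  simp only [objective_add_smul, add_assoc, le_add_iff_nonneg_right] at hseg
  exact nonneg_of_forall_mul_add_sq_mul_nonneg hseg

lemma unilateral_deriv_nonneg (hopt : IsOptimal c b D pbar wplus wminus a w0 p pp pm x)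
    (m : U) {q qp qm : ℝ} (hq0 : 0 ≤ q) (hq1 : q ≤ pbar m) (hqp : 0 ≤ qp) (hqm : 0 ≤ qm) :
    0 ≤ (c m * p m + b m - marginalPrice a w0 x m) * (q - p m)
      + (wplus - marginalPrice a w0 x m) * (qp - pp m)
      - (wminus - marginalPrice a w0 x m) * (qm - pm m) := by
  classical
  have hz' : Feasible D pbar (Function.update p m q) (Function.update pp m qp)
      (Function.update pm m qm) (Function.update x m (q + qp - qm - D m)) := by
    intro j
    by_cases hj : j = m
    · subst hj
      simp only [Function.update_self]
      exact ⟨by ring, hq0, hq1, hqp, hqm⟩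
    · simpa only [Function.update_of_ne hj] using hopt.1 j
  have hderiv := hopt.objectiveDeriv_nonneg hz'
  rw [objectiveDeriv, sum_eq_single m (fun j _ hj => by simp [Function.update_of_ne hj])
    (fun h => (h (mem_univ m)).elim)] at hderiv
  simp only [Pi.sub_apply, Function.update_self] at hderiv
  linear_combination hderiv + marginalPrice a w0 x m * (hopt.1 m).1

lemma marginalPrice_le_wplus (hopt : IsOptimal c b D pbar wplus wminus a w0 p pp pm x) (m : U) :
    marginalPrice a w0 x m ≤ wplus := by
  obtain ⟨-, hp0, hp1, hpp, hpm⟩ := hopt.1 m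
  have := hopt.unilateral_deriv_nonneg m hp0 hp1 (add_nonneg hpp zero_le_one) hpm
  linarith

lemma wminus_le_marginalPrice (hopt : IsOptimal c b D pbar wplus wminus a w0 p pp pm x) (m : U) :
    wminus ≤ marginalPrice a w0 x m := by
  obtain ⟨-, hp0, hp1, hpp, hpm⟩ := hopt.1 m
  have := hopt.unilateral_deriv_nonneg m hp0 hp1 hpp (add_nonneg hpm zero_le_one)
  linarith

lemma marginalPrice_eq_wplus (hopt : IsOptimal c b D pbar wplus wminus a w0 p pp pm x) {m : U}
    (hpp : 0 < pp m) : marginalPrice a w0 x m = wplus := by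
  obtain ⟨-, hp0, hp1, -, hpm⟩ := hopt.1 m
  have := hopt.unilateral_deriv_nonneg m hp0 hp1 le_rfl hpm
  exact (hopt.marginalPrice_le_wplus m).antisymm (by nlinarith)

lemma marginalPrice_eq_wminus (hopt : IsOptimal c b D pbar wplus wminus a w0 p pp pm x) {m : U}
    (hpm : 0 < pm m) : marginalPrice a w0 x m = wminus := by
  obtain ⟨-, hp0, hp1, hpp, -⟩ := hopt.1 m
  have := hopt.unilateral_deriv_nonneg m hp0 hp1 hpp le_rfl
  exact ((hopt.wminus_le_marginalPrice m).antisymm (by nlinarith)).symm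

lemma generation_eq_min (hopt : IsOptimal c b D pbar wplus wminus a w0 p pp pm x) {m : U}
    (hc : 0 < c m) (hbw : b m < wminus) :
    p m = min (pbar m) ((marginalPrice a w0 x m - b m) / c m) := by
  obtain ⟨-, hp0, hp1, hpp, hpm⟩ := hopt.1 m
  refine eq_min_div_of_forall_mul_sub_nonneg hc (hbw.trans_le (hopt.wminus_le_marginalPrice m))
    hp0 hp1 fun q hq0 hq1 => ?_
  simpa using hopt.unilateral_deriv_nonneg m hq0 hq1 hpp hpm

end IsOptimal

theorem lesm_optimal_modes_general
    (c b D pbar : U → ℝ) (wplus wminus a w0 : ℝ)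
    (hc : ∀ m, 0 < c m)
    (hbw : ∀ m, b m < wminus)
    (p pp pm x : U → ℝ)
    (hopt : IsOptimal c b D pbar wplus wminus a w0 p pp pm x) :
    ∀ m : U,
      (c m * (x m + D m) + b m - w0 + a * (∑ j : U, x j) + a * x m = 0 ∧
        p m = x m + D m) ∨
      (wplus - w0 + a * (∑ j : U, x j) + a * x m = 0 ∧
        p m = min (pbar m) ((wplus - b m) / c m)) ∨
      (wminus - w0 + a * (∑ j : U, x j) + a * x m = 0 ∧
        p m = min (pbar m) ((wminus - b m) / c m)) ∨
      (x m = pbar m - D m ∧ p m = pbar m) := by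
  intro m
  have hp := hopt.generation_eq_min (hc m) (hbw m)
  obtain ⟨hbal, -, hp1, hpp, hpm⟩ := hopt.1 m
  rcases hpp.lt_or_eq with hbuy | hbuy0
  · have hprice := hopt.marginalPrice_eq_wplus hbuy
    rw [hprice] at hp
    exact Or.inr (Or.inl ⟨by rw [← hprice, marginalPrice]; ring, hp⟩)
  rcases hpm.lt_or_eq with hsell | hsell0
  · have hprice := hopt.marginalPrice_eq_wminus hsell
    rw [hprice] at hp
    exact Or.inr (Or.inr (Or.inl ⟨by rw [← hprice, marginalPrice]; ring, hp⟩))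
  have hpx : p m = x m + D m := by linarith
  rcases hp1.lt_or_eq with hlt | hfull
  · have hinterior := (min_lt_iff.1 (hp ▸ hlt)).resolve_left (lt_irrefl _)
    rw [min_eq_right hinterior.le, eq_div_iff (hc m).ne', marginalPrice] at hp
    exact Or.inl ⟨by rw [← hpx]; linarith, hpx⟩
  · exact Or.inr (Or.inr (Or.inr ⟨by linarith, hfull⟩))

/-- at any optimal solution of the L-ESM subproblem, every
prosumer operates in one of the four modes of Lemma 1. -/
theorem lesm_optimal_modes [Nonempty U]
    (c b D pbar : U → ℝ) (wplus wminus a w0 : ℝ)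
    (hc : ∀ m, 0 < c m) (hpbar : ∀ m, 0 ≤ pbar m)
    (hb : ∀ m, 0 < b m) (hbw : ∀ m, b m < wminus)
    (hw : wminus < wplus) (ha : 0 < a)
    (p pp pm x : U → ℝ)
    (hopt : IsOptimal c b D pbar wplus wminus a w0 p pp pm x) :
    ∀ m : U,
      (c m * (x m + D m) + b m - w0 + a * (∑ j : U, x j) + a * x m = 0 ∧
        p m = x m + D m) ∨
      (wplus - w0 + a * (∑ j : U, x j) + a * x m = 0 ∧
        p m = min (pbar m) ((wplus - b m) / c m)) ∨
      (wminus - w0 + a * (∑ j : U, x j) + a * x m = 0 ∧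
        p m = min (pbar m) ((wminus - b m) / c m)) ∨
      (x m = pbar m - D m ∧ p m = pbar m) :=
  lesm_optimal_modes_general c b D pbar wplus wminus a w0 hc hbw p pp pm x hopt
end

section
/- Let (p*, p⁺*, p⁻*, x*) be an optimal solution of the L-ESM subproblem and set X* = Σ_{m∈U} x_m*. If p_m⁺* > 0 for some m ∈ U, then p_m⁻* = 0, the stationarity relation w⁺ − w⁰ + a·X* + a·x_m* = 0 holds, p_m* = min(p̄_m, (w⁺ − b_m)/c_m), and consequently x_m* > min(β_m, γ_m). -/
/-!
Fix every prosumer but `m`: optimality says that `(p_m, p⁺_m, p⁻_m, x_m)` minimises `m`'s own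
quadratic cost over its local feasible set. Lowering `p⁺_m` and `p⁻_m` together saves
`w⁺ − w⁻ > 0` per unit, so `p⁻_m = 0`. Since `p⁺_m > 0`, buying slightly more or less from the
grid while `x_m` follows is feasible, which forces stationarity in `x_m`; exchanging grid purchase
for local generation gives the one-sided optimality conditions for `p_m`, whose only solution is
`min(p̄_m, (w⁺ − b_m)/c_m)`. Finally `x_m = p_m + p⁺_m − D_m > p_m − D_m`.
-/

open Finset

variable {U : Type*} [Fintype U]

open Filter Topology Function

theorem sum_update_eq_sub_add {ι M : Type*} [Fintype ι] [DecidableEq ι] [AddCommGroup M]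
    (f : ι → M) (i : ι) (v : M) :
    ∑ j, update f i v j = ∑ j, f j - f i + v := by
  rw [sum_update_of_mem (mem_univ i), sum_eq_add_sum_sdiff_singleton_of_mem (mem_univ i) f]
  abel

theorem nonneg_of_forall_mul_add_mul_sq_nonneg {K A δ : ℝ} (hδ : 0 < δ)
    (h : ∀ t, 0 < t → t ≤ δ → 0 ≤ K * t + A * t ^ 2) : 0 ≤ K := by
  have hlim : Tendsto (fun t => K + A * t) (𝓝[>] 0) (𝓝 K) := by
    have : Tendsto (fun t => K + A * t) (𝓝 0) (𝓝 (K + A * 0)) :=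
      tendsto_const_nhds.add (tendsto_const_nhds.mul tendsto_id)
    simpa using this.mono_left nhdsWithin_le_nhds
  refine ge_of_tendsto hlim ?_
  filter_upwards [Ioc_mem_nhdsGT hδ] with t ⟨ht, htδ⟩
  refine le_of_mul_le_mul_right ?_ ht
  linear_combination h t ht htδ

theorem eq_zero_of_forall_abs_le_mul_add_mul_sq_nonneg {K A δ : ℝ} (hδ : 0 < δ)
    (h : ∀ t, |t| ≤ δ → 0 ≤ K * t + A * t ^ 2) : K = 0 := by
  have hK : 0 ≤ K := nonneg_of_forall_mul_add_mul_sq_nonneg (A := A) hδ fun t ht htδ =>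
    h t (by rwa [abs_of_pos ht])
  have hK' : 0 ≤ -K := nonneg_of_forall_mul_add_mul_sq_nonneg (A := A) hδ fun t ht htδ => by
    linear_combination h (-t) (by rwa [abs_neg, abs_of_pos ht])
  linarith

theorem eq_min_div_of_optimality_conditions {c r p pbar : ℝ} (hc : 0 < c) (hr : 0 < r)
    (hp : 0 ≤ p) (hpbar : p ≤ pbar) (hdown : 0 < p → c * p ≤ r) (hup : p < pbar → r ≤ c * p) :
    p = min pbar (r / c) := by
  have hle : p ≤ r / c := by
    rcases hp.lt_or_eq with hp | hp
    · rw [le_div_iff₀ hc]; linarith [hdown hp]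
    · rw [← hp]; positivity
  refine le_antisymm (le_min hpbar hle) ?_
  rcases hpbar.lt_or_eq with hlt | heq
  · exact min_le_of_right_le ((div_le_iff₀ hc).2 (by linarith [hup hlt]))
  · exact min_le_of_left_le heq.ge

theorem feasible_update {ι : Type*} [DecidableEq ι] {D pbar p pp pm x : ι → ℝ}
    (hf : Feasible D pbar p pp pm x) (m : ι) {q qp qm y : ℝ}
    (hbal : D m + y + qm = q + qp) (hq : 0 ≤ q) (hqbar : q ≤ pbar m) (hqp : 0 ≤ qp)
    (hqm : 0 ≤ qm) :
    Feasible D pbar (update p m q) (update pp m qp) (update pm m qm) (update x m y) := by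
  intro j
  by_cases hj : j = m
  · subst hj; simpa using ⟨hbal, hq, hqbar, hqp, hqm⟩
  · simpa [hj] using hf j

/-- The terms of `Objective` that involve prosumer `m`'s variables `(q, qp, qm, y)`, the trades of
the other prosumers being read off `x`. -/
noncomputable def prosumerCost (c b : U → ℝ) (wplus wminus a w0 : ℝ) (x : U → ℝ) (m : U)
    (q qp qm y : ℝ) : ℝ :=
  c m / 2 * q ^ 2 + b m * q + wplus * qp - wminus * qm - w0 * y
    + a / 2 * y ^ 2 + a / 2 * (∑ j, x j - x m + y) ^ 2

theorem objective_update [DecidableEq U] (c b : U → ℝ) (wplus wminus a w0 : ℝ)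
    (p pp pm x : U → ℝ) (m : U) (q qp qm y : ℝ) :
    Objective c b wplus wminus a w0 (update p m q) (update pp m qp) (update pm m qm)
        (update x m y) =
      Objective c b wplus wminus a w0 p pp pm x
        - prosumerCost c b wplus wminus a w0 x m (p m) (pp m) (pm m) (x m)
        + prosumerCost c b wplus wminus a w0 x m q qp qm y := by
  have hsum : ∀ g : U → ℝ → ℝ → ℝ → ℝ → ℝ,
      ∑ j, g j (update p m q j) (update pp m qp j) (update pm m qm j) (update x m y j) =
        ∑ j, g j (p j) (pp j) (pm j) (x j) - g m (p m) (pp m) (pm m) (x m) + g m q qp qm y := by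
    intro g
    rw [← sum_update_eq_sub_add]
    refine sum_congr rfl fun j _ => ?_
    by_cases hj : j = m
    · subst hj; simp
    · simp [hj]
  have h1 := hsum fun j q qp qm y =>
    c j / 2 * q ^ 2 + b j * q + wplus * qp - wminus * qm - w0 * y
  have h2 := hsum fun _ _ _ _ y => y ^ 2
  have h3 := hsum fun _ _ _ _ y => y
  unfold Objective prosumerCost
  rw [h1, h2, h3]
  ring

namespace IsOptimal

variable {c b D pbar p pp pm x : U → ℝ} {wplus wminus a w0 : ℝ} {m : U}

theorem prosumerCost_le (hopt : IsOptimal c b D pbar wplus wminus a w0 p pp pm x) (m : U)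
    {q qp qm y : ℝ} (hbal : D m + y + qm = q + qp) (hq : 0 ≤ q) (hqbar : q ≤ pbar m)
    (hqp : 0 ≤ qp) (hqm : 0 ≤ qm) :
    prosumerCost c b wplus wminus a w0 x m (p m) (pp m) (pm m) (x m) ≤
      prosumerCost c b wplus wminus a w0 x m q qp qm y := by
  classical
  have h := hopt.2 _ _ _ _ (feasible_update hopt.1 m hbal hq hqbar hqp hqm)
  rw [objective_update] at h
  linarith

theorem pm_eq_zero (hopt : IsOptimal c b D pbar wplus wminus a w0 p pp pm x)
    (hw : wminus < wplus) (hpp : 0 < pp m) : pm m = 0 := by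
  obtain ⟨hbal, hp, hpbar, -, hpm⟩ := hopt.1 m
  by_contra hne
  set ε := min (pp m) (pm m)
  have hε : 0 < ε := lt_min hpp (hpm.lt_of_ne' hne)
  have h := hopt.prosumerCost_le m (q := p m) (qp := pp m - ε) (qm := pm m - ε) (y := x m)
    (by linarith) hp hpbar (by linarith [min_le_left (pp m) (pm m)])
    (by linarith [min_le_right (pp m) (pm m)])
  simp only [prosumerCost] at h
  nlinarith [mul_pos hε (sub_pos.2 hw)]

theorem stationarity (hopt : IsOptimal c b D pbar wplus wminus a w0 p pp pm x)
    (hpp : 0 < pp m) : wplus - w0 + a * ∑ j, x j + a * x m = 0 := by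
  obtain ⟨hbal, hp, hpbar, -, hpm⟩ := hopt.1 m
  refine eq_zero_of_forall_abs_le_mul_add_mul_sq_nonneg (A := a) hpp fun t ht => ?_
  have h := hopt.prosumerCost_le m (q := p m) (qp := pp m + t) (qm := pm m) (y := x m + t)
    (by linarith) hp hpbar (by linarith [neg_abs_le t]) hpm
  simp only [prosumerCost] at h
  linear_combination h

theorem c_mul_p_le (hopt : IsOptimal c b D pbar wplus wminus a w0 p pp pm x)
    (hp : 0 < p m) : c m * p m ≤ wplus - b m := by
  obtain ⟨hbal, -, hpbar, hpp, hpm⟩ := hopt.1 m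
  have hslope : 0 ≤ -(c m * p m + b m - wplus) :=
    nonneg_of_forall_mul_add_mul_sq_nonneg (A := c m / 2) hp fun t ht htp => by
      have h := hopt.prosumerCost_le m (q := p m - t) (qp := pp m + t) (qm := pm m) (y := x m)
        (by linarith) (by linarith) (by linarith) (by linarith) hpm
      simp only [prosumerCost] at h
      linear_combination h
  linarith

theorem le_c_mul_p (hopt : IsOptimal c b D pbar wplus wminus a w0 p pp pm x)
    (hpp : 0 < pp m) (hpbar : p m < pbar m) : wplus - b m ≤ c m * p m := by
  obtain ⟨hbal, hp, -, -, hpm⟩ := hopt.1 m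
  have hδ : 0 < min (pbar m - p m) (pp m) := lt_min (by linarith) hpp
  have hslope : 0 ≤ c m * p m + b m - wplus :=
    nonneg_of_forall_mul_add_mul_sq_nonneg (A := c m / 2) hδ fun t ht htδ => by
      have h := hopt.prosumerCost_le m (q := p m + t) (qp := pp m - t) (qm := pm m) (y := x m)
        (by linarith) (by linarith) (by linarith [min_le_left (pbar m - p m) (pp m)])
        (by linarith [min_le_right (pbar m - p m) (pp m)]) hpm
      simp only [prosumerCost] at h
      linear_combination h
  linarith

theorem p_eq_min (hopt : IsOptimal c b D pbar wplus wminus a w0 p pp pm x)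
    (hc : 0 < c m) (hb : b m < wplus) (hpp : 0 < pp m) :
    p m = min (pbar m) ((wplus - b m) / c m) := by
  obtain ⟨-, hp, hpbar, -, -⟩ := hopt.1 m
  exact eq_min_div_of_optimality_conditions hc (sub_pos.2 hb) hp hpbar hopt.c_mul_p_le
    (hopt.le_c_mul_p hpp)

end IsOptimal

theorem lesm_mode2_characterization_general
    (c b D pbar : U → ℝ) (wplus wminus a w0 : ℝ)
    (hc : ∀ m, 0 < c m)
    (hbw : ∀ m, b m < wminus)
    (hw : wminus < wplus)
    (p pp pm x : U → ℝ)
    (hopt : IsOptimal c b D pbar wplus wminus a w0 p pp pm x)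
    (m : U) (hppm : 0 < pp m) :
    pm m = 0 ∧
    wplus - w0 + a * (∑ j : U, x j) + a * x m = 0 ∧
    p m = min (pbar m) ((wplus - b m) / c m) ∧
    min ((wplus - b m) / c m - D m) (pbar m - D m) < x m := by
  have hpm := hopt.pm_eq_zero hw hppm
  have hp := hopt.p_eq_min (hc m) ((hbw m).trans hw) hppm
  refine ⟨hpm, hopt.stationarity hppm, hp, ?_⟩
  obtain ⟨hbal, -⟩ := hopt.1 m
  rw [min_sub_sub_right, min_comm, ← hp]
  linarith

/-- if `p⁺_m > 0` at an optimum then prosumer `m` is in Mode 2: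
`p⁻_m = 0`, the Mode-2 stationarity relation holds,
`p_m = min(p̄_m, (w⁺ − b_m)/c_m)`, and `x_m > min(β_m, γ_m)`. -/
theorem lesm_mode2_characterization [Nonempty U]
    (c b D pbar : U → ℝ) (wplus wminus a w0 : ℝ)
    (hc : ∀ m, 0 < c m) (hpbar : ∀ m, 0 ≤ pbar m)
    (hb : ∀ m, 0 < b m) (hbw : ∀ m, b m < wminus)
    (hw : wminus < wplus) (ha : 0 < a)
    (p pp pm x : U → ℝ)
    (hopt : IsOptimal c b D pbar wplus wminus a w0 p pp pm x)
    (m : U) (hppm : 0 < pp m) :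
    pm m = 0 ∧
    wplus - w0 + a * (∑ j : U, x j) + a * x m = 0 ∧
    p m = min (pbar m) ((wplus - b m) / c m) ∧
    min ((wplus - b m) / c m - D m) (pbar m - D m) < x m :=
  lesm_mode2_characterization_general c b D pbar wplus wminus a w0 hc hbw hw p pp pm x hopt m hppm
end

section
/- Let (p*, p⁺*, p⁻*, x*) be an optimal solution of the L-ESM subproblem and set X* = Σ_{m∈U} x_m*. If p_m⁻* > 0 for some m ∈ U, then p_m⁺* = 0, the stationarity relation w⁻ − w⁰ + a·X* + a·x_m* = 0 holds, p_m* = min(p̄_m, (w⁻ − b_m)/c_m), and consequently x_m* < min(α_m, γ_m). -/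
open Finset

variable {U : Type*} [Fintype U]

lemma sum_update_univ [DecidableEq U] (f : U → ℝ) (m : U) (v : ℝ) :
    ∑ j : U, Function.update f m v j = (∑ j : U, f j) + (v - f m) := by
  rw [Finset.sum_update_of_mem (Finset.mem_univ m),
    Finset.sum_eq_sum_sdiff_singleton_add (Finset.mem_univ m) f]
  ring

lemma sum_comp_update [DecidableEq U] (g : U → ℝ → ℝ) (f : U → ℝ) (m : U) (v : ℝ) :
    ∑ j : U, g j (Function.update f m v j)
      = (∑ j : U, g j (f j)) + (g m v - g m (f m)) := by
  have h : ∀ j : U, g j (Function.update f m v j)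
      = Function.update (fun j => g j (f j)) m (g m v) j := by
    intro j
    by_cases hj : j = m
    · subst hj; simp
    · simp [Function.update_of_ne hj]
  rw [Finset.sum_congr rfl (fun j _ => h j), sum_update_univ]

lemma key_ineq [DecidableEq U] (c b D pbar : U → ℝ) (wplus wminus a w0 : ℝ)
    (p pp pm x : U → ℝ)
    (hopt : IsOptimal c b D pbar wplus wminus a w0 p pp pm x)
    (m : U) (q qp qm y : ℝ)
    (hbal : D m + y + qm = q + qp) (h1 : 0 ≤ q) (h2 : q ≤ pbar m)
    (h3 : 0 ≤ qp) (h4 : 0 ≤ qm) :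
    0 ≤ (c m / 2 * q ^ 2 + b m * q + wplus * qp - wminus * qm - w0 * y)
      - (c m / 2 * (p m) ^ 2 + b m * (p m) + wplus * (pp m) - wminus * (pm m) - w0 * (x m))
      + a / 2 * (y ^ 2 - (x m) ^ 2)
      + a / 2 * (((∑ j : U, x j) + (y - x m)) ^ 2 - (∑ j : U, x j) ^ 2) := by
  have hfeas : Feasible D pbar (Function.update p m q) (Function.update pp m qp)
      (Function.update pm m qm) (Function.update x m y) := by
    intro j
    by_cases hj : j = m
    · subst hj; simp [hbal, h1, h2, h3, h4]
    · simp only [Function.update_of_ne hj]; exact hopt.1 j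
  have hle := hopt.2 _ _ _ _ hfeas
  have e1 : Objective c b wplus wminus a w0 (Function.update p m q)
      (Function.update pp m qp) (Function.update pm m qm) (Function.update x m y)
      = Objective c b wplus wminus a w0 p pp pm x
        + ((c m / 2 * q ^ 2 + b m * q + wplus * qp - wminus * qm - w0 * y)
          - (c m / 2 * (p m) ^ 2 + b m * (p m) + wplus * (pp m) - wminus * (pm m) - w0 * (x m))
          + a / 2 * (y ^ 2 - (x m) ^ 2)
          + a / 2 * (((∑ j : U, x j) + (y - x m)) ^ 2 - (∑ j : U, x j) ^ 2)) := by
    unfold Objective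
    have hs1 : ∑ j : U, (c j / 2 * (Function.update p m q j) ^ 2
        + b j * Function.update p m q j + wplus * Function.update pp m qp j
        - wminus * Function.update pm m qm j - w0 * Function.update x m y j)
        = (∑ j : U, (c j / 2 * (p j) ^ 2 + b j * p j + wplus * pp j
            - wminus * pm j - w0 * x j))
          + ((c m / 2 * q ^ 2 + b m * q + wplus * qp - wminus * qm - w0 * y)
            - (c m / 2 * (p m) ^ 2 + b m * p m + wplus * pp m - wminus * pm m - w0 * x m)) := by
      have h : ∀ j : U, (c j / 2 * (Function.update p m q j) ^ 2
          + b j * Function.update p m q j + wplus * Function.update pp m qp j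
          - wminus * Function.update pm m qm j - w0 * Function.update x m y j)
          = Function.update (fun j => c j / 2 * (p j) ^ 2 + b j * p j + wplus * pp j
              - wminus * pm j - w0 * x j) m
              (c m / 2 * q ^ 2 + b m * q + wplus * qp - wminus * qm - w0 * y) j := by
        intro j
        by_cases hj : j = m
        · subst hj; simp
        · simp [Function.update_of_ne hj]
      rw [Finset.sum_congr rfl (fun j _ => h j), sum_update_univ]
    have hs2 : ∑ j : U, (Function.update x m y j) ^ 2
        = (∑ j : U, (x j) ^ 2) + (y ^ 2 - (x m) ^ 2) :=
      sum_comp_update (fun _ t => t ^ 2) x m y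
    have hs3 : ∑ j : U, Function.update x m y j = (∑ j : U, x j) + (y - x m) :=
      sum_update_univ x m y
    rw [hs1, hs2, hs3]; ring
  linarith [hle, e1.ge, e1.le]

set_option maxHeartbeats 2000000 in
/-- if `p⁻_m > 0` at an optimum then prosumer `m` is in Mode 3:
`p⁺_m = 0`, the Mode-3 stationarity relation holds,
`p_m = min(p̄_m, (w⁻ − b_m)/c_m)`, and `x_m < min(α_m, γ_m)`. -/
theorem lesm_mode3_characterization [Nonempty U]
    (c b D pbar : U → ℝ) (wplus wminus a w0 : ℝ)
    (hc : ∀ m, 0 < c m) (hpbar : ∀ m, 0 ≤ pbar m)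
    (hb : ∀ m, 0 < b m) (hbw : ∀ m, b m < wminus)
    (hw : wminus < wplus) (ha : 0 < a)
    (p pp pm x : U → ℝ)
    (hopt : IsOptimal c b D pbar wplus wminus a w0 p pp pm x)
    (m : U) (hpmm : 0 < pm m) :
    pp m = 0 ∧
    wminus - w0 + a * (∑ j : U, x j) + a * x m = 0 ∧
    p m = min (pbar m) ((wminus - b m) / c m) ∧
    x m < min ((wminus - b m) / c m - D m) (pbar m - D m) := by
  classical
  obtain ⟨hbal, hp0, hppbar, hpp0, hpm0⟩ := hopt.1 m
  set W : ℝ := (wminus - b m) / c m with hW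
  have hcne : c m ≠ 0 := (hc m).ne'
  have hcW : c m * W = wminus - b m := by
    rw [hW]; field_simp
  have hWpos : 0 < W := div_pos (by linarith [hbw m]) (hc m)
  -- Part 1 : pp m = 0
  have hpp : pp m = 0 := by
    by_contra hne
    have hppgt : 0 < pp m := lt_of_le_of_ne hpp0 (Ne.symm hne)
    have hεpos : 0 < min (pp m) (pm m) := lt_min hppgt hpmm
    have h := key_ineq c b D pbar wplus wminus a w0 p pp pm x hopt m
      (p m) (pp m - min (pp m) (pm m)) (pm m - min (pp m) (pm m)) (x m)
      (by linarith) hp0 hppbar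
      (by have := min_le_left (pp m) (pm m); linarith)
      (by have := min_le_right (pp m) (pm m); linarith)
    linarith [h, mul_pos hεpos (show (0:ℝ) < wplus - wminus by linarith)]
  -- Part 2 : stationarity
  have hstat : wminus - w0 + a * (∑ j : U, x j) + a * x m = 0 := by
    by_contra hK0
    set X : ℝ := ∑ j : U, x j with hX
    have hKabs : 0 < |wminus - w0 + a * X + a * x m| := abs_pos.mpr hK0
    set s : ℝ := min (pm m / |wminus - w0 + a * X + a * x m|) (1 / (2 * a)) with hs
    have hspos : 0 < s :=
      lt_min (div_pos hpmm hKabs) (by positivity)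
    have habs : |wminus - w0 + a * X + a * x m| * s ≤ pm m := by
      calc |wminus - w0 + a * X + a * x m| * s
          ≤ |wminus - w0 + a * X + a * x m| *
            (pm m / |wminus - w0 + a * X + a * x m|) :=
            mul_le_mul_of_nonneg_left (min_le_left _ _) (abs_nonneg _)
        _ = pm m := by field_simp
    have hqm : 0 ≤ pm m - (-(wminus - w0 + a * X + a * x m) * s) := by
      nlinarith [neg_abs_le (wminus - w0 + a * X + a * x m), hspos.le, habs]
    have h := key_ineq c b D pbar wplus wminus a w0 p pp pm x hopt m
      (p m) (pp m) (pm m - (-(wminus - w0 + a * X + a * x m) * s))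
      (x m + (-(wminus - w0 + a * X + a * x m) * s))
      (by linarith) hp0 hppbar hpp0 hqm
    rw [← hX] at h
    have has : a * s ≤ 1 / 2 := by
      have h2 := min_le_right (pm m / |wminus - w0 + a * X + a * x m|) (1 / (2 * a))
      calc a * s ≤ a * (1 / (2 * a)) := by
            exact mul_le_mul_of_nonneg_left h2 ha.le
        _ = 1 / 2 := by
            field_simp
    have h' : 0 ≤ -(wminus - w0 + a * X + a * x m) ^ 2 * s
        + a * (wminus - w0 + a * X + a * x m) ^ 2 * s ^ 2 := by
      linarith [h]
    set K : ℝ := wminus - w0 + a * X + a * x m with hKd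
    have hK2 : 0 < K ^ 2 := pow_two_pos_of_ne_zero hK0
    have hA : 0 < K ^ 2 * s := mul_pos hK2 hspos
    have hB : 0 ≤ (1 / 2 - a * s) * (K ^ 2 * s) := mul_nonneg (by linarith) hA.le
    clear_value s K
    linarith [h', hA, hB]
  -- Part 3 : p m = min (pbar m) W
  have hple : p m ≤ W := by
    by_contra hgt
    push_neg at hgt
    have htpos : 0 < min (pm m) (p m - W) := lt_min hpmm (by linarith)
    have ht1 : min (pm m) (p m - W) ≤ pm m := min_le_left _ _
    have ht2 : min (pm m) (p m - W) ≤ p m - W := min_le_right _ _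
    have h := key_ineq c b D pbar wplus wminus a w0 p pp pm x hopt m
      (p m - min (pm m) (p m - W)) (pp m) (pm m - min (pm m) (p m - W)) (x m)
      (by linarith) (by linarith) (by linarith) hpp0 (by linarith)
    have hN : wminus - b m < c m * p m := by
      have := mul_lt_mul_of_pos_left hgt (hc m); nlinarith [hcW]
    have hct : c m * min (pm m) (p m - W) ≤ c m * p m - (wminus - b m) := by
      have := mul_le_mul_of_nonneg_left ht2 (hc m).le; nlinarith [hcW]
    have hA : 0 < min (pm m) (p m - W) * (c m * p m - (wminus - b m)) :=
      mul_pos htpos (by linarith)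
    have hB : 0 ≤ (c m * p m - (wminus - b m) - c m * min (pm m) (p m - W))
        * min (pm m) (p m - W) := mul_nonneg (by linarith) htpos.le
    linarith [h, hA, hB]
  have hge : min (pbar m) W ≤ p m := by
    by_contra hlt
    push_neg at hlt
    have htpos : 0 < min (pbar m) W - p m := by linarith
    have hq0 : 0 ≤ min (pbar m) W := le_min (hpbar m) hWpos.le
    have h := key_ineq c b D pbar wplus wminus a w0 p pp pm x hopt m
      (p m + (min (pbar m) W - p m)) (pp m) (pm m + (min (pbar m) W - p m)) (x m)
      (by linarith) (by linarith) (by linarith [min_le_left (pbar m) W]) hpp0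
      (by linarith)
    have hqW : min (pbar m) W ≤ W := min_le_right _ _
    have hM : c m * p m < wminus - b m := by
      have := mul_lt_mul_of_pos_left (lt_of_lt_of_le hlt hqW) (hc m); nlinarith [hcW]
    have hct : c m * (min (pbar m) W - p m) ≤ (wminus - b m) - c m * p m := by
      have := mul_le_mul_of_nonneg_left hqW (hc m).le; nlinarith [hcW]
    have hA : 0 < (min (pbar m) W - p m) * ((wminus - b m) - c m * p m) :=
      mul_pos htpos (by linarith)
    have hB : 0 ≤ ((wminus - b m) - c m * p m - c m * (min (pbar m) W - p m))
        * (min (pbar m) W - p m) := mul_nonneg (by linarith) htpos.le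
    linarith [h, hA, hB]
  have hpeq : p m = min (pbar m) W := le_antisymm (le_min hppbar hple) hge
  refine ⟨hpp, hstat, hpeq, ?_⟩
  have hx : x m = p m - pm m - D m := by
    have := hbal; rw [hpp] at this; linarith
  exact lt_min (by linarith) (by linarith)
end

section
/- Let (p*, p⁺*, p⁻*, x*) be an optimal solution of the L-ESM subproblem and set X* = Σ_{m∈U} x_m*. If for some m ∈ U with p̄_m > 0 one has p_m⁺* = 0, p_m⁻* = 0, and p_m* = p̄_m (so x_m* = p̄_m − D_m, Mode 4), then max(w⁻, c_m·p̄_m + b_m) ≤ w⁰ − a·(x_m* + X*) ≤ w⁺; in particular c_m·p̄_m + b_m ≤ w⁺, i.e. γ_m ≤ β_m. -/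
open Finset

variable {U : Type*} [Fintype U]

/-!
At a Mode 4 optimum three single-coordinate moves stay feasible for small steps `t > 0`:
selling more (`p⁻_m += t`, `x_m -= t`), curtailing generation (`p_m -= t`, `x_m -= t`)
and buying more (`p⁺_m += t`, `x_m += t`). Along each the objective is a quadratic in `t`,
so optimality forces its linear coefficient to be nonnegative. With `W = w⁰ − a (x_m + X)`
the marginal value of `x_m`, these slopes are `W − w⁻`, `W − (c_m p̄_m + b_m)`
and `w⁺ − W`.
-/

open Filter Topology

lemma objective_add_single [DecidableEq U] (c b : U → ℝ) (wplus wminus a w0 : ℝ)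
    (p pp pm x : U → ℝ) (m : U) (dp dpp dpm dx t : ℝ) :
    Objective c b wplus wminus a w0 (p + Pi.single m (t * dp)) (pp + Pi.single m (t * dpp))
        (pm + Pi.single m (t * dpm)) (x + Pi.single m (t * dx)) =
      Objective c b wplus wminus a w0 p pp pm x
        + t * ((c m * p m + b m) * dp + wplus * dpp - wminus * dpm
            + (a * (x m + ∑ j, x j) - w0) * dx)
        + t ^ 2 * (c m / 2 * dp ^ 2 + a * dx ^ 2) := by
  have hoff : ∀ v : ℝ, ∀ j ∈ ({m}ᶜ : Finset U), (Pi.single m v : U → ℝ) j = 0 :=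
    fun v j hj => by simp_all
  simp (contextual := true) only [Objective, Fintype.sum_eq_add_sum_compl m, Pi.add_apply,
    Pi.single_eq_same, hoff, add_zero]
  ring

lemma nonneg_of_forall_mul_add_sq_nonneg {A B ε : ℝ} (hε : 0 < ε)
    (h : ∀ t ∈ Set.Ioc 0 ε, 0 ≤ A * t + B * t ^ 2) : 0 ≤ A := by
  have hlim : Tendsto (fun t => A + B * t) (𝓝[>] 0) (𝓝 A) := by
    have : Continuous fun t : ℝ => A + B * t := by fun_prop
    simpa using (this.tendsto 0).mono_left nhdsWithin_le_nhds
  refine ge_of_tendsto hlim ?_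
  filter_upwards [Ioc_mem_nhdsGT hε] with t ht
  have := h t ht
  nlinarith [ht.1]

omit [Fintype U] in
lemma Feasible.add_single [DecidableEq U] {D pbar p pp pm x : U → ℝ}
    (hfeas : Feasible D pbar p pp pm x) (m : U) {vp vpp vpm vx : ℝ}
    (hbal : vx + vpm = vp + vpp) (hp₀ : 0 ≤ p m + vp) (hp₁ : p m + vp ≤ pbar m)
    (hpp : 0 ≤ pp m + vpp) (hpm : 0 ≤ pm m + vpm) :
    Feasible D pbar (p + Pi.single m vp) (pp + Pi.single m vpp) (pm + Pi.single m vpm)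
      (x + Pi.single m vx) := by
  intro j
  rcases eq_or_ne j m with rfl | hj
  · simp only [Pi.add_apply, Pi.single_eq_same]
    exact ⟨by linarith [(hfeas j).1], hp₀, hp₁, hpp, hpm⟩
  · simpa [Pi.single_eq_of_ne hj] using hfeas j

theorem IsOptimal.slope_nonneg_of_feasible_direction [DecidableEq U] {c b D pbar : U → ℝ}
    {wplus wminus a w0 : ℝ} {p pp pm x : U → ℝ}
    (hopt : IsOptimal c b D pbar wplus wminus a w0 p pp pm x) (m : U)
    {dp dpp dpm dx ε : ℝ} (hε : 0 < ε) (hbal : dx + dpm = dp + dpp)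
    (hbounds : ∀ t ∈ Set.Ioc 0 ε, 0 ≤ p m + t * dp ∧ p m + t * dp ≤ pbar m ∧
      0 ≤ pp m + t * dpp ∧ 0 ≤ pm m + t * dpm) :
    0 ≤ (c m * p m + b m) * dp + wplus * dpp - wminus * dpm
      + (a * (x m + ∑ j, x j) - w0) * dx := by
  refine nonneg_of_forall_mul_add_sq_nonneg (B := c m / 2 * dp ^ 2 + a * dx ^ 2) hε
    fun t ht => ?_
  obtain ⟨hp₀, hp₁, hpp, hpm⟩ := hbounds t ht
  have hfeas := hopt.1.add_single m (vx := t * dx) (by linear_combination t * hbal)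
    hp₀ hp₁ hpp hpm
  have := hopt.2 _ _ _ _ hfeas
  rw [objective_add_single] at this
  linarith

theorem lesm_mode4_characterization_general
    (c b D pbar : U → ℝ) (wplus wminus a w0 : ℝ)
    (hc : ∀ m, 0 < c m)
    (p pp pm x : U → ℝ)
    (hopt : IsOptimal c b D pbar wplus wminus a w0 p pp pm x)
    (m : U) (hpbarm : 0 < pbar m)
    (hppm : pp m = 0) (hpmm : pm m = 0) (hpm : p m = pbar m) :
    x m = pbar m - D m ∧
    (max wminus (c m * pbar m + b m) ≤ w0 - a * (x m + ∑ j : U, x j) ∧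
      w0 - a * (x m + ∑ j : U, x j) ≤ wplus) ∧
    c m * pbar m + b m ≤ wplus ∧
    pbar m - D m ≤ (wplus - b m) / c m - D m := by
  classical
  have hx : x m = pbar m - D m := by linarith [(hopt.1 m).1]
  have hbounds : ∀ {dp dpp dpm ε : ℝ},
      0 ≤ pbar m + ε * dp → dp ≤ 0 → 0 ≤ dpp → 0 ≤ dpm →
      ∀ t ∈ Set.Ioc 0 ε, 0 ≤ p m + t * dp ∧ p m + t * dp ≤ pbar m ∧
        0 ≤ pp m + t * dpp ∧ 0 ≤ pm m + t * dpm := by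
    intro dp dpp dpm ε hε hdp hdpp hdpm t ⟨ht₀, htε⟩
    rw [hpm, hppm, hpmm]
    refine ⟨?_, ?_, ?_, ?_⟩ <;> nlinarith
  have hsell := hopt.slope_nonneg_of_feasible_direction m (dp := 0) (dpp := 0) (dpm := 1)
    (dx := -1) one_pos (by ring) (hbounds (by linarith) le_rfl le_rfl zero_le_one)
  have hcurtail := hopt.slope_nonneg_of_feasible_direction m (dp := -1) (dpp := 0) (dpm := 0)
    (dx := -1) hpbarm (by ring) (hbounds (by linarith) (by norm_num) le_rfl le_rfl)
  have hbuy := hopt.slope_nonneg_of_feasible_direction m (dp := 0) (dpp := 1) (dpm := 0)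
    (dx := 1) one_pos (by ring) (hbounds (by linarith) le_rfl zero_le_one le_rfl)
  rw [hpm] at hcurtail
  have hmc : c m * pbar m + b m ≤ wplus := by linarith
  refine ⟨hx, ⟨max_le (by linarith) (by linarith), by linarith⟩, hmc, ?_⟩
  have : pbar m ≤ (wplus - b m) / c m := (le_div_iff₀ (hc m)).mpr (by linarith)
  linarith

/-- if `p̄_m > 0`, `p⁺_m = 0`, `p⁻_m = 0` and `p_m = p̄_m` at an
optimum (Mode 4, so `x_m = p̄_m − D_m`), then
`max(w⁻, c_m p̄_m + b_m) ≤ w⁰ − a(x_m + X) ≤ w⁺`;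
in particular `c_m p̄_m + b_m ≤ w⁺`, i.e. `γ_m ≤ β_m`. -/
theorem lesm_mode4_characterization [Nonempty U]
    (c b D pbar : U → ℝ) (wplus wminus a w0 : ℝ)
    (hc : ∀ m, 0 < c m) (hpbar : ∀ m, 0 ≤ pbar m)
    (hb : ∀ m, 0 < b m) (hbw : ∀ m, b m < wminus)
    (hw : wminus < wplus) (ha : 0 < a)
    (p pp pm x : U → ℝ)
    (hopt : IsOptimal c b D pbar wplus wminus a w0 p pp pm x)
    (m : U) (hpbarm : 0 < pbar m)
    (hppm : pp m = 0) (hpmm : pm m = 0) (hpm : p m = pbar m) :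
    x m = pbar m - D m ∧
    (max wminus (c m * pbar m + b m) ≤ w0 - a * (x m + ∑ j : U, x j) ∧
      w0 - a * (x m + ∑ j : U, x j) ≤ wplus) ∧
    c m * pbar m + b m ≤ wplus ∧
    pbar m - D m ≤ (wplus - b m) / c m - D m :=
  lesm_mode4_characterization_general c b D pbar wplus wminus a w0 hc p pp pm x hopt m hpbarm hppm
    hpmm hpm
end

section
/- The aggregate maps w⁰ ↦ X(w⁰) and w⁰ ↦ P(w⁰) are continuous and piecewise affine on ℝ: there exist finitely many breakpoints t_1 < t_2 < ... < t_k in ℝ such that on each of the closed intervals (−∞, t_1], [t_1, t_2], ..., [t_k, ∞), both X(·) and P(·) agree with an affine function of w⁰. -/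
/-!
Freezing the aggregate term at the inner price `s = w⁰ - a X(w⁰)` decouples the prosumers. Each
one then faces a local price `ℓ_m(s)` (the multiplier of its balance constraint): the price at
which its clamped marginal-cost supply covers its own import, clamped to `[w⁻, w⁺]`. The resulting
candidate satisfies the first-order conditions, and as the objective is strongly convex in `p`
and `x`, every optimal solution has this `p` and `x`. Each `ℓ_m` is built from affine functions of
`s` by `max` and `min`, so the aggregates and `w⁰ = s + a X` are continuous and piecewise affine in
`s`. The map `s ↦ w⁰` is strictly increasing and onto, and composing with its inverse preserves
piecewise affinity.
-/

open Finset

variable {U : Type*} [Fintype U]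

section Clamp

variable {α : Type*} [LinearOrder α]

def clamp (lo hi z : α) : α := max lo (min hi z)

lemma clamp_mem_Icc {lo hi : α} (h : lo ≤ hi) (z : α) : clamp lo hi z ∈ Set.Icc lo hi :=
  ⟨le_max_left _ _, max_le h (min_le_left _ _)⟩

lemma clamp_eq_self {lo hi z : α} (h : z ∈ Set.Icc lo hi) : clamp lo hi z = z := by
  rw [clamp, min_eq_right h.2, max_eq_right h.1]

lemma monotone_clamp (lo hi : α) : Monotone (clamp lo hi) :=
  fun _ _ h => max_le_max le_rfl (min_le_min le_rfl h)

lemma clamp_apply_clamp_of_antitone {L : α → α} (hL : Antitone L) {z : α} (hz : L z = z)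
    {lo hi : α} (h : lo ≤ hi) : clamp lo hi (L (clamp lo hi z)) = clamp lo hi z := by
  rcases lt_or_ge z lo with hlo | hlo
  · have hclamp : clamp lo hi z = lo := by
      rw [clamp, max_eq_left ((min_le_right _ _).trans hlo.le)]
    have hLlo : L lo ≤ lo := (hL hlo.le).trans (hz.trans_lt hlo).le
    rw [hclamp, clamp, max_eq_left ((min_le_right _ _).trans hLlo)]
  rcases le_or_gt z hi with hhi | hhi
  · rw [clamp_eq_self ⟨hlo, hhi⟩, hz, clamp_eq_self ⟨hlo, hhi⟩]
  · have hclamp : clamp lo hi z = hi := by rw [clamp, min_eq_left hhi.le, max_eq_right h]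
    rw [hclamp, clamp, min_eq_left (hhi.le.trans (hz.symm.trans_le (hL hhi.le))), max_eq_right h]

variable {β : Type*} [Preorder β] {E : α → β}

lemma clamp_eq_right_of_lt (hE : Antitone E) {lo hi z : α} (h : lo ≤ hi)
    (hlt : E z < E (clamp lo hi z)) : clamp lo hi z = hi := by
  rcases le_or_gt z hi with hz | hz
  · have hle : z ≤ clamp lo hi z := by rw [clamp, min_eq_right hz]; exact le_max_right _ _
    exact absurd (hE hle) hlt.not_ge
  · rw [clamp, min_eq_left hz.le, max_eq_right h]

lemma clamp_eq_left_of_lt (hE : Antitone E) {lo hi z : α}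
    (hlt : E (clamp lo hi z) < E z) : clamp lo hi z = lo := by
  rcases le_or_gt (min hi z) lo with hz | hz
  · rw [clamp, max_eq_left hz]
  · have hle : clamp lo hi z ≤ z := by rw [clamp, max_eq_right hz.le]; exact min_le_right _ _
    exact absurd (hE hle) hlt.not_ge

end Clamp

section OrderedRing

variable {α : Type*} [CommRing α] [LinearOrder α] [IsStrictOrderedRing α]

lemma clamp_sub_mul_sub_nonneg {lo hi v : α} (hv : v ∈ Set.Icc lo hi) (z : α) :
    0 ≤ (clamp lo hi z - z) * (v - clamp lo hi z) := by
  rcases lt_or_ge z lo with hlo | hlo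
  · rw [clamp, max_eq_left ((min_le_right _ _).trans hlo.le)]
    exact mul_nonneg (sub_nonneg.2 hlo.le) (sub_nonneg.2 hv.1)
  rcases le_or_gt z hi with hhi | hhi
  · rw [clamp_eq_self ⟨hlo, hhi⟩, sub_self, zero_mul]
  · rw [clamp, min_eq_left hhi.le, max_eq_right (hv.1.trans hv.2)]
    exact mul_nonneg_of_nonpos_of_nonpos (sub_nonpos.2 hhi.le) (sub_nonpos.2 hv.2)

lemma clamp_sub_clamp_le {lo hi x y d : α} (hd : 0 ≤ d) (h : y - x ≤ d) :
    clamp lo hi y - clamp lo hi x ≤ d := by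
  simp only [clamp, max_def, min_def]
  split_ifs <;> linarith

lemma mul_sub_max_zero_nonneg {μ t q : α} (hμ : 0 ≤ μ) (h : 0 < t → μ = 0) (hq : 0 ≤ q) :
    0 ≤ μ * (q - max t 0) := by
  rcases lt_or_ge 0 t with ht | ht
  · rw [h ht, zero_mul]
  · rw [max_eq_right ht, sub_zero]
    exact mul_nonneg hμ hq

end OrderedRing

section PiecewiseAffine

-- `R` lies in one closed cell of the subdivision of `ℝ` by the points of `S`.
def Unseparated (S : Finset ℝ) (R : Set ℝ) : Prop :=
  ∀ r ∈ S, R ⊆ Set.Iic r ∨ R ⊆ Set.Ici r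

def AffineOnCells (S : Finset ℝ) (f : ℝ → ℝ) : Prop :=
  ∀ R, Unseparated S R → ∃ α β : ℝ, ∀ s ∈ R, f s = α * s + β

def IsPiecewiseAffine (f : ℝ → ℝ) : Prop := ∃ S : Finset ℝ, AffineOnCells S f

lemma Unseparated.mono {S T : Finset ℝ} {R : Set ℝ} (h : Unseparated T R) (hST : S ⊆ T) :
    Unseparated S R :=
  fun r hr => h r (hST hr)

def cell (S : Finset ℝ) (τ : S → Bool) : Set ℝ :=
  {s | ∀ r : S, if τ r then s ≤ r else (r : ℝ) ≤ s}

lemma unseparated_cell (S : Finset ℝ) (τ : S → Bool) : Unseparated S (cell S τ) := by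
  intro r hr
  by_cases h : τ ⟨r, hr⟩
  · exact Or.inl fun s hs => by simpa [h] using hs ⟨r, hr⟩
  · exact Or.inr fun s hs => by simpa [h] using hs ⟨r, hr⟩

lemma Unseparated.exists_subset_cell {S : Finset ℝ} {R : Set ℝ} (h : Unseparated S R) :
    ∃ τ, R ⊆ cell S τ := by
  classical
  refine ⟨fun r => decide (R ⊆ Set.Iic r), fun s hs r => ?_⟩
  by_cases hr : R ⊆ Set.Iic r
  · simpa [hr] using hr hs
  · simpa [hr] using ((h r r.2).resolve_left hr) hs

lemma exists_strictMono_unseparated (S : Finset ℝ) :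
    ∃ (k : ℕ) (t : Fin k → ℝ), StrictMono t ∧ ∀ i : Fin (k + 1), Unseparated S
      {w | (∀ j : Fin k, (j : ℕ) < i → t j ≤ w) ∧ (∀ j : Fin k, (i : ℕ) ≤ j → w ≤ t j)} := by
  refine ⟨S.card, S.orderEmbOfFin rfl, (S.orderEmbOfFin rfl).strictMono, fun i r hr => ?_⟩
  obtain ⟨j, rfl⟩ : r ∈ Set.range (S.orderEmbOfFin rfl) := by
    rwa [Finset.range_orderEmbOfFin]
  rcases lt_or_ge (j : ℕ) i with h | h
  · exact Or.inr fun w hw => hw.1 j h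
  · exact Or.inl fun w hw => hw.2 j h

namespace IsPiecewiseAffine

variable {f g : ℝ → ℝ}

lemma of_affine {α β : ℝ} (hf : ∀ s, f s = α * s + β) : IsPiecewiseAffine f :=
  ⟨∅, fun _ _ => ⟨α, β, fun s _ => hf s⟩⟩

lemma const (β : ℝ) : IsPiecewiseAffine fun _ => β := of_affine (α := 0) fun _ => by ring

protected lemma id : IsPiecewiseAffine fun s => s := of_affine (α := 1) (β := 0) fun _ => by ring

lemma congr (hf : IsPiecewiseAffine f) (h : ∀ s, f s = g s) : IsPiecewiseAffine g := by
  obtain ⟨S, hS⟩ := hf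
  refine ⟨S, fun R hR => ?_⟩
  obtain ⟨α, β, hαβ⟩ := hS R hR
  exact ⟨α, β, fun s hs => (h s).symm.trans (hαβ s hs)⟩

lemma sum {ι : Type*} [Fintype ι] {f : ι → ℝ → ℝ} (hf : ∀ i, IsPiecewiseAffine (f i)) :
    IsPiecewiseAffine fun s => ∑ i, f i s := by
  choose S hS using hf
  refine ⟨Finset.univ.biUnion S, fun R hR => ?_⟩
  choose α β h using fun i =>
    hS i R (hR.mono (Finset.subset_biUnion_of_mem S (Finset.mem_univ i)))
  exact ⟨∑ i, α i, ∑ i, β i, fun s hs => by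
    simp only [h _ s hs, Finset.sum_mul, ← Finset.sum_add_distrib]⟩

lemma add (hf : IsPiecewiseAffine f) (hg : IsPiecewiseAffine g) :
    IsPiecewiseAffine fun s => f s + g s :=
  (sum (f := ![f, g]) (Fin.forall_fin_two.2 ⟨hf, hg⟩)).congr fun s => by simp

lemma const_mul (hf : IsPiecewiseAffine f) (k : ℝ) : IsPiecewiseAffine fun s => k * f s := by
  obtain ⟨S, hS⟩ := hf
  refine ⟨S, fun R hR => ?_⟩
  obtain ⟨α, β, hαβ⟩ := hS R hR
  exact ⟨k * α, k * β, fun s hs => by beta_reduce; rw [hαβ s hs]; ring⟩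

lemma sub (hf : IsPiecewiseAffine f) (hg : IsPiecewiseAffine g) :
    IsPiecewiseAffine fun s => f s - g s :=
  (hf.add (hg.const_mul (-1))).congr fun s => by ring

lemma abs (hf : IsPiecewiseAffine f) : IsPiecewiseAffine fun s => |f s| := by
  obtain ⟨S, hS⟩ := hf
  choose α β hαβ using fun τ => hS _ (unseparated_cell S τ)
  -- The root of the affine piece on each cell is a breakpoint, so `f` has one sign on `R`.
  refine ⟨S ∪ Finset.univ.image (fun τ => -β τ / α τ), fun R hR => ?_⟩
  obtain ⟨τ, hτ⟩ := (hR.mono Finset.subset_union_left).exists_subset_cell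
  by_cases h0 : α τ = 0
  · exact ⟨0, |β τ|, fun s hs => by beta_reduce; rw [hαβ τ s (hτ hs), h0]; simp⟩
  have hroot : ∀ s ∈ R, |f s| = |α τ| * |s - -β τ / α τ| := fun s hs => by
    rw [hαβ τ s (hτ hs), ← abs_mul]; congr 1; field_simp; ring
  rcases hR _ (Finset.mem_union_right _ (Finset.mem_image_of_mem _ (Finset.mem_univ τ)))
    with hle | hge
  · exact ⟨-|α τ|, |α τ| * (-β τ / α τ), fun s hs => by
      beta_reduce; rw [hroot s hs, abs_of_nonpos (sub_nonpos.2 (hle hs))]; ring⟩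
  · exact ⟨|α τ|, -(|α τ| * (-β τ / α τ)), fun s hs => by
      beta_reduce; rw [hroot s hs, abs_of_nonneg (sub_nonneg.2 (hge hs))]; ring⟩

lemma max (hf : IsPiecewiseAffine f) (hg : IsPiecewiseAffine g) :
    IsPiecewiseAffine fun s => max (f s) (g s) := by
  refine (((hf.add hg).add (hf.sub hg).abs).const_mul (1 / 2)).congr fun s => ?_
  rcases le_total (f s) (g s) with h | h
  · rw [max_eq_right h, abs_of_nonpos (sub_nonpos.2 h)]; ring
  · rw [max_eq_left h, abs_of_nonneg (sub_nonneg.2 h)]; ring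

lemma min (hf : IsPiecewiseAffine f) (hg : IsPiecewiseAffine g) :
    IsPiecewiseAffine fun s => min (f s) (g s) :=
  ((hf.add hg).sub (hf.max hg)).congr fun s => by rw [← min_add_max (f s) (g s)]; ring

lemma clamp (hf : IsPiecewiseAffine f) (lo hi : ℝ) :
    IsPiecewiseAffine fun s => clamp lo hi (f s) :=
  (const lo).max ((const hi).min hf)

lemma comp_orderIso_symm (hf : IsPiecewiseAffine f) (e : ℝ ≃o ℝ) (he : IsPiecewiseAffine e) :
    IsPiecewiseAffine (f ∘ e.symm) := by
  obtain ⟨S, hS⟩ := he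
  obtain ⟨T, hT⟩ := hf
  refine ⟨(S ∪ T).image e, fun R hR => ?_⟩
  have hR' : Unseparated (S ∪ T) (e ⁻¹' R) := fun r hr =>
    (hR (e r) (Finset.mem_image_of_mem e hr)).imp
      (fun h s hs => e.le_iff_le.1 (h hs)) (fun h s hs => e.le_iff_le.1 (h hs))
  obtain ⟨α, β, hαβ⟩ := hS _ (hR'.mono Finset.subset_union_left)
  obtain ⟨γ, δ, hγδ⟩ := hT _ (hR'.mono Finset.subset_union_right)
  have hw : ∀ w ∈ R, w = α * e.symm w + β := fun w hw => by
    conv_lhs => rw [← e.apply_symm_apply w]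
    exact hαβ _ (by simpa using hw)
  by_cases hα : α = 0
  · refine ⟨0, f (e.symm β), fun w hw' => ?_⟩
    have : w = β := by simpa [hα] using hw w hw'
    simp [this]
  · refine ⟨γ / α, δ - γ * β / α, fun w hw' => ?_⟩
    have hs : e.symm w = (w - β) / α := by rw [eq_div_iff hα]; linarith [hw w hw']
    rw [Function.comp_apply, hγδ _ (by simpa using hw'), hs]
    field_simp
    ring

end IsPiecewiseAffine

end PiecewiseAffine

section Prosumer

variable (c b pb a : ℝ)

noncomputable def supply (price : ℝ) : ℝ := clamp 0 pb ((price - b) / c)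

-- The price solving `price + a * supply price = σ`: the clamped term is the generation there.
noncomputable def balancePrice (σ : ℝ) : ℝ := σ - a * clamp 0 pb ((σ - b) / (c + a))

-- Price of the balance constraint of a prosumer facing the inner price `s = w⁰ - a X`.
noncomputable def localPrice (D wplus wminus s : ℝ) : ℝ :=
  clamp wminus wplus (balancePrice c b pb a (s + a * D))

variable {c b pb a}

lemma supply_mem_Icc (hpb : 0 ≤ pb) (price : ℝ) : supply c b pb price ∈ Set.Icc 0 pb :=
  clamp_mem_Icc hpb _

lemma supply_monotone (hc : 0 < c) : Monotone (supply c b pb) :=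
  (monotone_clamp 0 pb).comp fun _ _ h => by gcongr

lemma supply_variational (hc : 0 < c) (price : ℝ) {q : ℝ} (hq : q ∈ Set.Icc 0 pb) :
    0 ≤ (c * supply c b pb price + b - price) * (q - supply c b pb price) := by
  set z := (price - b) / c
  have key : (c * supply c b pb price + b - price) * (q - supply c b pb price)
      = c * ((clamp 0 pb z - z) * (q - clamp 0 pb z)) := by
    simp only [supply, z]
    field_simp
    ring
  exact key ▸ mul_nonneg hc.le (clamp_sub_mul_sub_nonneg hq z)

lemma supply_balancePrice (hc : 0 < c) (ha : 0 < a) (hpb : 0 ≤ pb) (σ : ℝ) :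
    supply c b pb (balancePrice c b pb a σ) = clamp 0 pb ((σ - b) / (c + a)) :=
  clamp_apply_clamp_of_antitone (L := fun y => (σ - a * y - b) / c)
    (fun _ _ h => by dsimp only; gcongr) (by field_simp; ring) hpb

lemma localPrice_mem_Icc {D wplus wminus : ℝ} (hw : wminus ≤ wplus) (s : ℝ) :
    localPrice c b pb a D wplus wminus s ∈ Set.Icc wminus wplus :=
  clamp_mem_Icc hw _

lemma monotone_sub_localPrice (hc : 0 < c) (ha : 0 < a) (D wplus wminus : ℝ) :
    Monotone fun s => s - localPrice c b pb a D wplus wminus s := by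
  intro s s' h
  have hgen : clamp 0 pb ((s + a * D - b) / (c + a)) ≤ clamp 0 pb ((s' + a * D - b) / (c + a)) :=
    monotone_clamp 0 pb (by gcongr)
  have := clamp_sub_clamp_le (lo := wminus) (hi := wplus) (sub_nonneg.2 h)
    (show balancePrice c b pb a (s' + a * D) - balancePrice c b pb a (s + a * D) ≤ s' - s by
      unfold balancePrice; nlinarith)
  simp only [localPrice] at this ⊢
  linarith

lemma isPiecewiseAffine_localPrice (D wplus wminus : ℝ) :
    IsPiecewiseAffine (localPrice c b pb a D wplus wminus) := by
  have hσ : IsPiecewiseAffine fun s => s + a * D := .add .id (.const _)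
  have hz : IsPiecewiseAffine fun s => (s + a * D - b) / (c + a) :=
    .of_affine (α := 1 / (c + a)) (β := (a * D - b) / (c + a)) fun s => by ring
  exact (hσ.sub ((hz.clamp 0 pb).const_mul a)).clamp wminus wplus

section NetPurchase

variable (hc : 0 < c) (ha : 0 < a) {D wplus wminus s : ℝ}
include hc ha

-- `D + (s - price) / a - supply price` is the prosumer's net purchase `p⁺ - p⁻` at `price`.
lemma antitone_netPurchase :
    Antitone fun price => D + (s - price) / a - supply c b pb price := fun x y h => by
  have := supply_monotone (b := b) (pb := pb) hc h
  have : (s - y) / a ≤ (s - x) / a := by gcongr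
  dsimp only
  linarith

lemma netPurchase_balancePrice (hpb : 0 ≤ pb) :
    D + (s - balancePrice c b pb a (s + a * D)) / a
      - supply c b pb (balancePrice c b pb a (s + a * D)) = 0 := by
  rw [supply_balancePrice hc ha hpb]
  unfold balancePrice
  field_simp
  ring

lemma localPrice_eq_wplus (hpb : 0 ≤ pb) (hw : wminus ≤ wplus)
    (h : 0 < D + (s - localPrice c b pb a D wplus wminus s) / a
      - supply c b pb (localPrice c b pb a D wplus wminus s)) :
    localPrice c b pb a D wplus wminus s = wplus :=
  clamp_eq_right_of_lt (antitone_netPurchase hc ha) hw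
    ((netPurchase_balancePrice hc ha hpb).trans_lt h)

lemma localPrice_eq_wminus (hpb : 0 ≤ pb)
    (h : D + (s - localPrice c b pb a D wplus wminus s) / a
      - supply c b pb (localPrice c b pb a D wplus wminus s) < 0) :
    localPrice c b pb a D wplus wminus s = wminus :=
  clamp_eq_left_of_lt (antitone_netPurchase hc ha)
    (h.trans_eq (netPurchase_balancePrice hc ha hpb).symm)

end NetPurchase

end Prosumer

section Subproblem

variable {c b D pbar : U → ℝ} {wplus wminus a w : ℝ}

-- `ℓ m` is the multiplier of the balance constraint of `m` at `(p', pp', pm', x')`.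
lemma objective_sub_objective {p pp pm x p' pp' pm' x' ℓ : U → ℝ}
    (hbal : ∀ m, D m + x m + pm m = p m + pp m) (hbal' : ∀ m, D m + x' m + pm' m = p' m + pp' m)
    (hℓ : ∀ m, ℓ m = w - a * x' m - a * ∑ i, x' i) :
    Objective c b wplus wminus a w p pp pm x - Objective c b wplus wminus a w p' pp' pm' x' =
      ∑ m, (c m / 2 * (p m - p' m) ^ 2 + a / 2 * (x m - x' m) ^ 2
        + (c m * p' m + b m - ℓ m) * (p m - p' m) + (wplus - ℓ m) * (pp m - pp' m)
        + (ℓ m - wminus) * (pm m - pm' m)) + a / 2 * (∑ m, (x m - x' m)) ^ 2 := by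
  have key : ∀ m, c m / 2 * (p m - p' m) ^ 2 + a / 2 * (x m - x' m) ^ 2
      + (c m * p' m + b m - ℓ m) * (p m - p' m) + (wplus - ℓ m) * (pp m - pp' m)
      + (ℓ m - wminus) * (pm m - pm' m)
      = (c m / 2 * p m ^ 2 + b m * p m + wplus * pp m - wminus * pm m - w * x m)
        - (c m / 2 * p' m ^ 2 + b m * p' m + wplus * pp' m - wminus * pm' m - w * x' m)
        + a / 2 * x m ^ 2 - a / 2 * x' m ^ 2 + a * (∑ i, x' i) * (x m - x' m) := fun m => by
    linear_combination ℓ m * (hbal m - hbal' m) - (x m - x' m) * hℓ m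
  rw [Finset.sum_congr rfl fun m _ => key m]
  unfold Objective
  simp only [Finset.sum_add_distrib, Finset.sum_sub_distrib, ← Finset.mul_sum]
  ring

theorem IsOptimal.eq_of_variational {p pp pm x p' pp' pm' x' ℓ : U → ℝ}
    (hc : ∀ m, 0 < c m) (ha : 0 < a)
    (hopt : IsOptimal c b D pbar wplus wminus a w p pp pm x)
    (hfeas : Feasible D pbar p' pp' pm' x') (hℓ : ∀ m, ℓ m = w - a * x' m - a * ∑ i, x' i)
    (hp : ∀ m q, q ∈ Set.Icc 0 (pbar m) → 0 ≤ (c m * p' m + b m - ℓ m) * (q - p' m))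
    (hpp : ∀ m q, 0 ≤ q → 0 ≤ (wplus - ℓ m) * (q - pp' m))
    (hpm : ∀ m q, 0 ≤ q → 0 ≤ (ℓ m - wminus) * (q - pm' m)) :
    p = p' ∧ x = x' := by
  set Q : U → ℝ := fun m => c m / 2 * (p m - p' m) ^ 2 + a / 2 * (x m - x' m) ^ 2
  have hQ : ∀ m, 0 ≤ Q m := fun m => by
    have := hc m
    positivity
  have hsum : ∑ m, Q m ≤ 0 := by
    have hdiff := objective_sub_objective (c := c) (b := b) (wplus := wplus) (wminus := wminus)
      (fun m => (hopt.1 m).1) (fun m => (hfeas m).1) hℓ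
    have hle := hopt.2 p' pp' pm' x' hfeas
    have hlin : ∀ m, Q m ≤ Q m + (c m * p' m + b m - ℓ m) * (p m - p' m)
        + (wplus - ℓ m) * (pp m - pp' m) + (ℓ m - wminus) * (pm m - pm' m) := fun m => by
      obtain ⟨-, hp0, hp1, hpp0, hpm0⟩ := hopt.1 m
      linarith [hp m (p m) ⟨hp0, hp1⟩, hpp m (pp m) hpp0, hpm m (pm m) hpm0]
    have := Finset.sum_le_sum fun m (_ : m ∈ Finset.univ) => hlin m
    nlinarith [sq_nonneg (∑ m, (x m - x' m))]
  have hQ0 : ∀ m, Q m = 0 := fun m =>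
    (Finset.sum_eq_zero_iff_of_nonneg fun m _ => hQ m).1
      (le_antisymm hsum (Finset.sum_nonneg fun m _ => hQ m)) m (Finset.mem_univ m)
  have hsq : ∀ m, c m * (p m - p' m) ^ 2 = 0 ∧ a * (x m - x' m) ^ 2 = 0 := fun m => by
    have hQm : Q m = 0 := hQ0 m
    have := mul_nonneg (hc m).le (sq_nonneg (p m - p' m))
    have := mul_nonneg ha.le (sq_nonneg (x m - x' m))
    simp only [Q] at hQm
    constructor <;> linarith
  constructor <;> funext m
  · simpa [sub_eq_zero, (hc m).ne'] using (hsq m).1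
  · simpa [sub_eq_zero, ha.ne'] using (hsq m).2

end Subproblem

section Aggregates

variable (c b D pbar : U → ℝ) (wplus wminus a : ℝ)

noncomputable def totalImport (s : ℝ) : ℝ :=
  ∑ m, (s - localPrice (c m) (b m) (pbar m) a (D m) wplus wminus s) / a

noncomputable def totalSurplus (s : ℝ) : ℝ :=
  ∑ m, (supply (c m) (b m) (pbar m) (localPrice (c m) (b m) (pbar m) a (D m) wplus wminus s) - D m)

-- The base price `w⁰` whose inner price `w⁰ - a X(w⁰)` is `s`.
noncomputable def basePrice (s : ℝ) : ℝ := s + a * totalImport c b D pbar wplus wminus a s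

variable {c b D pbar wplus wminus a}

theorem IsOptimal.aggregates_eq (hc : ∀ m, 0 < c m) (hpbar : ∀ m, 0 ≤ pbar m)
    (hw : wminus ≤ wplus) (ha : 0 < a) {w s : ℝ} {p pp pm x : U → ℝ}
    (hopt : IsOptimal c b D pbar wplus wminus a w p pp pm x)
    (hs : basePrice c b D pbar wplus wminus a s = w) :
    ∑ m, x m = totalImport c b D pbar wplus wminus a s ∧
      ∑ m, (x m + pm m - pp m) = totalSurplus c b D pbar wplus wminus a s := by
  subst hs
  set ℓ : U → ℝ := fun m => localPrice (c m) (b m) (pbar m) a (D m) wplus wminus s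
  set p' : U → ℝ := fun m => supply (c m) (b m) (pbar m) (ℓ m)
  set x' : U → ℝ := fun m => (s - ℓ m) / a
  have hfeas : Feasible D pbar p' (fun m => max (D m + x' m - p' m) 0)
      (fun m => max (-(D m + x' m - p' m)) 0) x' := fun m =>
    ⟨by linarith [max_zero_sub_max_neg_zero_eq_self (D m + x' m - p' m)],
      (supply_mem_Icc (hpbar m) _).1, (supply_mem_Icc (hpbar m) _).2,
      le_max_right _ _, le_max_right _ _⟩
  have hℓ : ∀ m, ℓ m = basePrice c b D pbar wplus wminus a s - a * x' m - a * ∑ i, x' i :=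
    fun m => by
      change ℓ m = s + a * ∑ i, x' i - a * ((s - ℓ m) / a) - a * ∑ i, x' i
      field_simp
      ring
  obtain ⟨rfl, rfl⟩ := hopt.eq_of_variational hc ha hfeas hℓ
    (fun m _ hq => supply_variational (hc m) _ hq)
    (fun m _ hq => mul_sub_max_zero_nonneg (sub_nonneg.2 (localPrice_mem_Icc hw s).2)
      (fun h => sub_eq_zero.2 (localPrice_eq_wplus (hc m) ha (hpbar m) hw h).symm) hq)
    (fun m _ hq => mul_sub_max_zero_nonneg (sub_nonneg.2 (localPrice_mem_Icc hw s).1)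
      (fun h => sub_eq_zero.2 (localPrice_eq_wminus (hc m) ha (hpbar m) (neg_pos.1 h))) hq)
  refine ⟨rfl, Finset.sum_congr rfl fun m _ => ?_⟩
  linarith [(hopt.1 m).1]

lemma continuous_totalImport : Continuous (totalImport c b D pbar wplus wminus a) := by
  unfold totalImport localPrice balancePrice clamp
  fun_prop

lemma continuous_totalSurplus : Continuous (totalSurplus c b D pbar wplus wminus a) := by
  unfold totalSurplus supply localPrice balancePrice clamp
  fun_prop

lemma isPiecewiseAffine_totalImport : IsPiecewiseAffine (totalImport c b D pbar wplus wminus a) :=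
  .sum fun _ => (IsPiecewiseAffine.id.sub (isPiecewiseAffine_localPrice _ _ _)).const_mul a⁻¹
    |>.congr fun _ => by ring

lemma isPiecewiseAffine_totalSurplus :
    IsPiecewiseAffine (totalSurplus c b D pbar wplus wminus a) :=
  .sum fun m => ((((isPiecewiseAffine_localPrice _ _ _).sub (.const (b m))).const_mul
    (c m)⁻¹).clamp 0 (pbar m) |>.congr fun _ => by rw [supply, div_eq_inv_mul]).sub (.const (D m))

lemma isPiecewiseAffine_basePrice : IsPiecewiseAffine (basePrice c b D pbar wplus wminus a) :=
  IsPiecewiseAffine.id.add (isPiecewiseAffine_totalImport.const_mul a)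

open Filter in
lemma exists_orderIso_basePrice (hc : ∀ m, 0 < c m) (ha : 0 < a) :
    ∃ e : ℝ ≃o ℝ, ⇑e = basePrice c b D pbar wplus wminus a := by
  have hmono : Monotone fun s => a * totalImport c b D pbar wplus wminus a s :=
    fun s s' h => mul_le_mul_of_nonneg_left (Finset.sum_le_sum fun m _ =>
      div_le_div_of_nonneg_right (monotone_sub_localPrice (hc m) ha _ _ _ h) ha.le) ha.le
  have hcont : Continuous (basePrice c b D pbar wplus wminus a) :=
    continuous_id.add (continuous_const.mul continuous_totalImport)
  have htop := (eventually_ge_atTop 0).mono fun _ h => hmono h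
  have hbot := (eventually_le_atBot 0).mono fun _ h => hmono h
  have hsurj := hcont.surjective (tendsto_atTop_add_right_of_le' _ _ tendsto_id htop)
    (tendsto_atBot_add_right_of_ge' _ _ tendsto_id hbot)
  exact ⟨_, StrictMono.coe_orderIsoOfSurjective _ (strictMono_id.add_monotone hmono) hsurj⟩

end Aggregates

theorem lesm_aggregates_piecewise_affine_general
    (c b D pbar : U → ℝ) (wplus wminus a : ℝ)
    (hc : ∀ m, 0 < c m) (hpbar : ∀ m, 0 ≤ pbar m)
    (hw : wminus < wplus) (ha : 0 < a)
    (pstar ppstar pmstar xstar : ℝ → U → ℝ)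
    (hopt : ∀ w0 : ℝ, IsOptimal c b D pbar wplus wminus a w0
      (pstar w0) (ppstar w0) (pmstar w0) (xstar w0))
    (X P : ℝ → ℝ)
    (hX : X = fun w0 => ∑ m : U, xstar w0 m)
    (hP : P = fun w0 => ∑ m : U, (xstar w0 m + pmstar w0 m - ppstar w0 m)) :
    Continuous X ∧ Continuous P ∧
    ∃ (k : ℕ) (t : Fin k → ℝ), StrictMono t ∧
      ∃ cX dX cP dP : Fin (k + 1) → ℝ,
        ∀ (i : Fin (k + 1)) (w : ℝ),
          (∀ j : Fin k, (j : ℕ) < (i : ℕ) → t j ≤ w) →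
          (∀ j : Fin k, (i : ℕ) ≤ (j : ℕ) → w ≤ t j) →
          X w = cX i * w + dX i ∧ P w = cP i * w + dP i := by
  obtain ⟨e, he⟩ := exists_orderIso_basePrice (b := b) (D := D) (pbar := pbar)
    (wplus := wplus) (wminus := wminus) hc ha
  have haggr := fun w => (hopt w).aggregates_eq hc hpbar hw.le ha (s := e.symm w)
    (by rw [← he, e.apply_symm_apply])
  have hXe : X = totalImport c b D pbar wplus wminus a ∘ e.symm := hX ▸ funext fun w => (haggr w).1
  have hPe : P = totalSurplus c b D pbar wplus wminus a ∘ e.symm := hP ▸ funext fun w => (haggr w).2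
  have he' : IsPiecewiseAffine e := he ▸ isPiecewiseAffine_basePrice
  obtain ⟨SX, hSX⟩ : IsPiecewiseAffine X :=
    hXe ▸ isPiecewiseAffine_totalImport.comp_orderIso_symm e he'
  obtain ⟨SP, hSP⟩ : IsPiecewiseAffine P :=
    hPe ▸ isPiecewiseAffine_totalSurplus.comp_orderIso_symm e he'
  obtain ⟨k, t, ht, hcell⟩ := exists_strictMono_unseparated (SX ∪ SP)
  choose cX dX hcX using fun i => hSX _ ((hcell i).mono Finset.subset_union_left)
  choose cP dP hcP using fun i => hSP _ ((hcell i).mono Finset.subset_union_right)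
  exact ⟨hXe ▸ continuous_totalImport.comp e.symm.continuous,
    hPe ▸ continuous_totalSurplus.comp e.symm.continuous, k, t, ht, cX, dX, cP, dP,
    fun i w h₁ h₂ => ⟨hcX i w ⟨h₁, h₂⟩, hcP i w ⟨h₁, h₂⟩⟩⟩

/-- the aggregate maps `w⁰ ↦ X(w⁰)` and `w⁰ ↦ P(w⁰)` are
continuous and piecewise affine: there are finitely many breakpoints
`t 0 < t 1 < ⋯ < t (k-1)` such that on each of the `k+1` closed intervals
they determine, both maps agree with an affine function. -/
theorem lesm_aggregates_piecewise_affine [Nonempty U]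
    (c b D pbar : U → ℝ) (wplus wminus a : ℝ)
    (hc : ∀ m, 0 < c m) (hpbar : ∀ m, 0 ≤ pbar m)
    (hb : ∀ m, 0 < b m) (hbw : ∀ m, b m < wminus)
    (hw : wminus < wplus) (ha : 0 < a)
    (pstar ppstar pmstar xstar : ℝ → U → ℝ)
    (hopt : ∀ w0 : ℝ, IsOptimal c b D pbar wplus wminus a w0
      (pstar w0) (ppstar w0) (pmstar w0) (xstar w0))
    (X P : ℝ → ℝ)
    (hX : X = fun w0 => ∑ m : U, xstar w0 m)
    (hP : P = fun w0 => ∑ m : U, (xstar w0 m + pmstar w0 m - ppstar w0 m)) :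
    Continuous X ∧ Continuous P ∧
    ∃ (k : ℕ) (t : Fin k → ℝ), StrictMono t ∧
      ∃ cX dX cP dP : Fin (k + 1) → ℝ,
        ∀ (i : Fin (k + 1)) (w : ℝ),
          (∀ j : Fin k, (j : ℕ) < (i : ℕ) → t j ≤ w) →
          (∀ j : Fin k, (i : ℕ) ≤ (j : ℕ) → w ≤ t j) →
          X w = cX i * w + dX i ∧ P w = cP i * w + dP i :=
  lesm_aggregates_piecewise_affine_general c b D pbar wplus wminus a hc hpbar hw ha pstar ppstar
    pmstar xstar hopt X P hX hP
end

section
/- The unique optimal solution of the L-ESM subproblem depends continuously on the base price: the map w⁰ ↦ (p*(w⁰), p⁺*(w⁰), p⁻*(w⁰), x*(w⁰)) from ℝ to (ℝ^U)⁴ is continuous. -/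
open Finset

variable {U : Type*} [Fintype U]

lemma feas_mid {D pbar : U → ℝ} {p pp pm x q qp qm y : U → ℝ}
    (h1 : Feasible D pbar p pp pm x) (h2 : Feasible D pbar q qp qm y) :
    Feasible D pbar (fun m => (p m + q m)/2) (fun m => (pp m + qp m)/2)
      (fun m => (pm m + qm m)/2) (fun m => (x m + y m)/2) := by
  intro m
  obtain ⟨e1, e2, e3, e4, e5⟩ := h1 m
  obtain ⟨f1, f2, f3, f4, f5⟩ := h2 m
  refine ⟨by linarith, by linarith, by linarith, by linarith, by linarith⟩

lemma obj_mid (c b : U → ℝ) (wplus wminus a w : ℝ) (p pp pm x q qp qm y : U → ℝ) :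
    Objective c b wplus wminus a w (fun m => (p m + q m)/2) (fun m => (pp m + qp m)/2)
      (fun m => (pm m + qm m)/2) (fun m => (x m + y m)/2)
    = (Objective c b wplus wminus a w p pp pm x
        + Objective c b wplus wminus a w q qp qm y)/2
      - (∑ m : U, c m / 8 * (p m - q m)^2) - a/8 * (∑ m : U, (x m - y m)^2)
      - a/8 * (∑ m : U, (x m - y m))^2 := by
  simp only [Objective]
  have h1 : (∑ m : U, (c m / 2 * ((p m + q m)/2) ^ 2 + b m * ((p m + q m)/2)
      + wplus * ((pp m + qp m)/2) - wminus * ((pm m + qm m)/2) - w * ((x m + y m)/2)))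
      = ∑ m : U, (((c m / 2 * (p m) ^ 2 + b m * p m + wplus * pp m - wminus * pm m - w * x m)
        + (c m / 2 * (q m) ^ 2 + b m * q m + wplus * qp m - wminus * qm m - w * y m))/2
        - c m / 8 * (p m - q m)^2) := by
    apply Finset.sum_congr rfl; intro m _; ring
  have h2 : (∑ m : U, ((x m + y m)/2) ^ 2)
      = ∑ m : U, ((x m)^2/2 + (y m)^2/2 - (x m - y m)^2/4) := by
    apply Finset.sum_congr rfl; intro m _; ring
  have h3 : (∑ m : U, (x m + y m)/2) = ((∑ m : U, x m) + ∑ m : U, y m)/2 := by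
    rw [← Finset.sum_add_distrib, ← Finset.sum_div]
  have h4 : (∑ m : U, (x m - y m)) = (∑ m : U, x m) - ∑ m : U, y m := by
    rw [Finset.sum_sub_distrib]
  rw [h1, h2, h3, h4]
  rw [Finset.sum_sub_distrib, ← Finset.sum_div, Finset.sum_add_distrib]
  rw [show (∑ m : U, ((x m)^2/2 + (y m)^2/2 - (x m - y m)^2/4))
    = (∑ m : U, (x m)^2)/2 + (∑ m : U, (y m)^2)/2 - (∑ m : U, (x m - y m)^2)/4 by
    rw [Finset.sum_sub_distrib, Finset.sum_add_distrib, Finset.sum_div, Finset.sum_div, Finset.sum_div]]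
  ring

lemma obj_w (c b : U → ℝ) (wplus wminus a : ℝ) (w1 w2 : ℝ) (p pp pm x : U → ℝ) :
    Objective c b wplus wminus a w1 p pp pm x
    = Objective c b wplus wminus a w2 p pp pm x + (w2 - w1) * ∑ m : U, x m := by
  simp only [Objective]
  have h : (∑ m : U, (c m / 2 * (p m) ^ 2 + b m * p m + wplus * pp m - wminus * pm m - w1 * x m))
      = (∑ m : U, (c m / 2 * (p m) ^ 2 + b m * p m + wplus * pp m - wminus * pm m - w2 * x m))
        + ∑ m : U, (w2 - w1) * x m := by
    rw [← Finset.sum_add_distrib]; apply Finset.sum_congr rfl; intro m _; ring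
  rw [h, ← Finset.mul_sum]; ring

lemma key_bound {c b D pbar : U → ℝ} {wplus wminus a : ℝ} {w1 w2 : ℝ}
    {p1 pp1 pm1 x1 p2 pp2 pm2 x2 : U → ℝ}
    (h1 : IsOptimal c b D pbar wplus wminus a w1 p1 pp1 pm1 x1)
    (h2 : IsOptimal c b D pbar wplus wminus a w2 p2 pp2 pm2 x2) :
    2 * ((∑ m : U, c m / 8 * (p1 m - p2 m)^2) + a/8 * (∑ m : U, (x1 m - x2 m)^2)
        + a/8 * (∑ m : U, (x1 m - x2 m))^2)
      ≤ (w1 - w2) * (∑ m : U, (x1 m - x2 m)) / 2 := by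
  have hmid := feas_mid h1.1 h2.1
  have hA := h1.2 _ _ _ _ hmid
  have hB := h2.2 _ _ _ _ hmid
  rw [obj_mid] at hA hB
  have hD1 := obj_w c b wplus wminus a w1 w2 p1 pp1 pm1 x1
  have hD2 := obj_w c b wplus wminus a w1 w2 p2 pp2 pm2 x2
  have h4 : (∑ m : U, (x1 m - x2 m)) = (∑ m : U, x1 m) - ∑ m : U, x2 m :=
    Finset.sum_sub_distrib _ _
  have h5 : (w2 - w1) * (∑ m : U, x1 m) - (w2 - w1) * (∑ m : U, x2 m)
      = (w2 - w1) * (∑ m : U, (x1 m - x2 m)) := by rw [h4]; ring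
  have h6 : (w1 - w2) * (∑ m : U, (x1 m - x2 m)) / 2
      = -((w2 - w1) * (∑ m : U, (x1 m - x2 m))) / 2 := by ring
  linarith [hA, hB, hD1, hD2, h5, h6]

lemma coord_bound {c b D pbar : U → ℝ} {wplus wminus a : ℝ} {w1 w2 : ℝ}
    {p1 pp1 pm1 x1 p2 pp2 pm2 x2 : U → ℝ} (ha : 0 < a) (hc : ∀ m, 0 < c m)
    (h1 : IsOptimal c b D pbar wplus wminus a w1 p1 pp1 pm1 x1)
    (h2 : IsOptimal c b D pbar wplus wminus a w2 p2 pp2 pm2 x2) (m : U) :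
    a * c m * (p1 m - p2 m)^2 ≤ 4 * (w1 - w2)^2 ∧
      a^2 * (x1 m - x2 m)^2 ≤ 4 * (w1 - w2)^2 := by
  have hk := key_bound h1 h2
  set S := ∑ m : U, (x1 m - x2 m) with hS
  set δ := w1 - w2 with hδ
  clear_value S δ
  have hQ1 : (0:ℝ) ≤ ∑ m : U, c m / 8 * (p1 m - p2 m)^2 :=
    Finset.sum_nonneg fun i _ => by have := (hc i).le; positivity
  have hQ2 : (0:ℝ) ≤ ∑ m : U, (x1 m - x2 m)^2 :=
    Finset.sum_nonneg fun i _ => sq_nonneg _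
  have h7a : a/4 * S^2 ≤ δ * S / 2 := by
    linarith [hk, hQ1, mul_nonneg ha.le hQ2]
  have h7 : a^2 * S^2 ≤ 2*a*δ*S := by
    nlinarith [mul_le_mul_of_nonneg_left h7a ha.le]
  have h8 : a * δ * S ≤ 2*δ^2 := by nlinarith [h7, sq_nonneg (a*S - 2*δ)]
  have h9 : δ * S / 2 ≤ δ^2 / a := by
    rw [div_le_div_iff₀ two_pos ha]; nlinarith [h8]
  have hp1 : c m / 8 * (p1 m - p2 m)^2 ≤ ∑ i : U, c i / 8 * (p1 i - p2 i)^2 :=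
    Finset.single_le_sum (f := fun i => c i / 8 * (p1 i - p2 i)^2)
      (fun i _ => by have := (hc i).le; positivity) (Finset.mem_univ m)
  have hx1 : (x1 m - x2 m)^2 ≤ ∑ i : U, (x1 i - x2 i)^2 :=
    Finset.single_le_sum (f := fun i => (x1 i - x2 i)^2)
      (fun i _ => sq_nonneg _) (Finset.mem_univ m)
  have hx1' : a/8 * (x1 m - x2 m)^2 ≤ a/8 * ∑ i : U, (x1 i - x2 i)^2 :=
    mul_le_mul_of_nonneg_left hx1 (by positivity)
  constructor
  · have hcp : 2 * (c m / 8 * (p1 m - p2 m)^2) ≤ δ^2 / a := by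
      nlinarith [hk, hp1, hx1', sq_nonneg S, ha.le, h9, mul_nonneg ha.le (sq_nonneg S)]
    have := (le_div_iff₀ ha).1 hcp
    nlinarith [this]
  · have hcx : 2 * (a/8 * (x1 m - x2 m)^2) ≤ δ^2 / a := by
      nlinarith [hk, hp1, hx1', hQ1, sq_nonneg S, ha.le, h9, mul_nonneg ha.le (sq_nonneg S)]
    have := (le_div_iff₀ ha).1 hcx
    nlinarith [this]

lemma pp_pm_eq {c b D pbar : U → ℝ} {wplus wminus a w : ℝ}
    {p pp pm x : U → ℝ} (hw : wminus < wplus)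
    (hopt : IsOptimal c b D pbar wplus wminus a w p pp pm x) (m : U) :
    pp m = max (D m + x m - p m) 0 ∧ pm m = max (-(D m + x m - p m)) 0 := by
  classical
  obtain ⟨hfeas, hmin⟩ := hopt
  obtain ⟨e1, e2, e3, e4, e5⟩ := hfeas m
  set ε := min (pp m) (pm m) with hε
  have hε0 : 0 ≤ ε := le_min e4 e5
  have hεpp : ε ≤ pp m := min_le_left _ _
  have hεpm : ε ≤ pm m := min_le_right _ _
  -- perturbed point
  have hfeas' : Feasible D pbar p (Function.update pp m (pp m - ε))
      (Function.update pm m (pm m - ε)) x := by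
    intro m'
    by_cases hm : m' = m
    · subst hm
      simp only [Function.update_self]
      exact ⟨by linarith, (hfeas m').2.1, (hfeas m').2.2.1, by linarith, by linarith⟩
    · simp only [Function.update_of_ne hm]
      exact hfeas m'
  have hle := hmin _ _ _ _ hfeas'
  have hdiff : Objective c b wplus wminus a w p (Function.update pp m (pp m - ε))
        (Function.update pm m (pm m - ε)) x
      = Objective c b wplus wminus a w p pp pm x - (wplus - wminus) * ε := by
    simp only [Objective]
    have hsum : (∑ m' : U, (c m' / 2 * (p m') ^ 2 + b m' * p m'
          + wplus * (Function.update pp m (pp m - ε) m')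
          - wminus * (Function.update pm m (pm m - ε) m') - w * x m'))
        = (∑ m' : U, (c m' / 2 * (p m') ^ 2 + b m' * p m' + wplus * pp m'
          - wminus * pm m' - w * x m')) - (wplus - wminus) * ε := by
      have hstep : (∑ m' : U, ((c m' / 2 * (p m') ^ 2 + b m' * p m'
            + wplus * (Function.update pp m (pp m - ε) m')
            - wminus * (Function.update pm m (pm m - ε) m') - w * x m')
          - (c m' / 2 * (p m') ^ 2 + b m' * p m' + wplus * pp m'
            - wminus * pm m' - w * x m'))) = -((wplus - wminus) * ε) := by
        rw [Finset.sum_eq_single m]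
        · simp only [Function.update_self]; ring
        · intro m' _ hm'
          simp only [Function.update_of_ne hm']; ring
        · intro h; exact absurd (Finset.mem_univ m) h
      rw [Finset.sum_sub_distrib] at hstep
      linarith [hstep]
    rw [hsum]; ring
  rw [hdiff] at hle
  have hεle : ε ≤ 0 := by nlinarith [hle, hw]
  have hεz : ε = 0 := le_antisymm hεle hε0
  have hminz : min (pp m) (pm m) = 0 := by rw [← hε, hεz]
  rcases le_total (pp m) (pm m) with h | h
  · have hppz : pp m = 0 := by rw [min_eq_left h] at hminz; exact hminz
    constructor
    · rw [hppz, max_eq_right (by linarith)]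
    · rw [max_eq_left (by linarith)]; linarith
  · have hpmz : pm m = 0 := by rw [min_eq_right h] at hminz; exact hminz
    constructor
    · rw [max_eq_left (by linarith)]; linarith
    · rw [hpmz, max_eq_right (by linarith)]

lemma continuous_of_sq_bound (f : ℝ → ℝ) (A : ℝ) (hA : 0 < A)
    (h : ∀ w w' : ℝ, A * (f w - f w')^2 ≤ 4 * (w - w')^2) : Continuous f := by
  have hlip : LipschitzWith (Real.toNNReal (Real.sqrt (4 / A))) f := by
    apply LipschitzWith.of_dist_le_mul
    intro w w'
    rw [Real.dist_eq, Real.dist_eq, Real.coe_toNNReal _ (Real.sqrt_nonneg _)]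
    have hb : (f w - f w')^2 ≤ 4 / A * (w - w')^2 := by
      rw [div_mul_eq_mul_div, le_div_iff₀ hA, mul_comm]
      exact h w w'
    calc |f w - f w'| = Real.sqrt ((f w - f w')^2) := (Real.sqrt_sq_eq_abs _).symm
      _ ≤ Real.sqrt (4 / A * (w - w')^2) := Real.sqrt_le_sqrt hb
      _ = Real.sqrt (4 / A) * |w - w'| := by
          rw [Real.sqrt_mul (by positivity), Real.sqrt_sq_eq_abs]
  exact hlip.continuous

/-- the (unique) optimal solution of the L-ESM subproblem depends
continuously on the base price `w⁰`. -/
theorem lesm_optimal_solution_continuous [Nonempty U]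
    (c b D pbar : U → ℝ) (wplus wminus a : ℝ)
    (hc : ∀ m, 0 < c m) (hpbar : ∀ m, 0 ≤ pbar m)
    (hb : ∀ m, 0 < b m) (hbw : ∀ m, b m < wminus)
    (hw : wminus < wplus) (ha : 0 < a)
    (pstar ppstar pmstar xstar : ℝ → U → ℝ)
    (hopt : ∀ w0 : ℝ, IsOptimal c b D pbar wplus wminus a w0
      (pstar w0) (ppstar w0) (pmstar w0) (xstar w0)) :
    Continuous (fun w0 : ℝ => (pstar w0, ppstar w0, pmstar w0, xstar w0)) := by
  have hpc : ∀ m : U, Continuous (fun w => pstar w m) := fun m =>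
    continuous_of_sq_bound _ (a * c m) (mul_pos ha (hc m))
      (fun w w' => (coord_bound ha hc (hopt w) (hopt w') m).1)
  have hxc : ∀ m : U, Continuous (fun w => xstar w m) := fun m =>
    continuous_of_sq_bound _ (a^2) (by positivity)
      (fun w w' => (coord_bound ha hc (hopt w) (hopt w') m).2)
  have hP : Continuous pstar := continuous_pi hpc
  have hX : Continuous xstar := continuous_pi hxc
  have hppfun : ppstar = fun w m => max (D m + xstar w m - pstar w m) 0 :=
    funext fun w => funext fun m => (pp_pm_eq hw (hopt w) m).1
  have hpmfun : pmstar = fun w m => max (-(D m + xstar w m - pstar w m)) 0 :=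
    funext fun w => funext fun m => (pp_pm_eq hw (hopt w) m).2
  have hPP : Continuous ppstar := by
    rw [hppfun]
    exact continuous_pi fun m =>
      ((continuous_const.add (hxc m)).sub (hpc m)).max continuous_const
  have hPM : Continuous pmstar := by
    rw [hpmfun]
    exact continuous_pi fun m =>
      ((continuous_const.add (hxc m)).sub (hpc m)).neg.max continuous_const
  exact hP.prodMk (hPP.prodMk (hPM.prodMk hX))
end

section
/- The optimal shared energy of each prosumer and the aggregate uncleared sharing energy are monotone nondecreasing in the base price: for all w₁ ≤ w₂ and every m ∈ U, x_m*(w₁) ≤ x_m*(w₂), and consequently X(w₁) ≤ X(w₂). -/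
open Finset

variable {U : Type*} [Fintype U]

/-- If `0 ≤ t*L + t^2*M` for all `t ∈ (0,1]`, then `0 ≤ L`. -/
lemma lin_of_quad (L M : ℝ)
    (h : ∀ t : ℝ, 0 < t → t ≤ 1 → 0 ≤ t * L + t ^ 2 * M) : 0 ≤ L := by
  by_contra hL
  push_neg at hL
  have hMpos : 0 < |M| + 1 := by positivity
  set t : ℝ := min 1 (-L / (2 * (|M| + 1))) with ht
  have htpos : 0 < t := lt_min one_pos (div_pos (by linarith) (by positivity))
  have ht1 : t ≤ 1 := min_le_left _ _
  have h2 : t ≤ -L / (2 * (|M| + 1)) := min_le_right _ _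
  have hb : t * (|M| + 1) ≤ -L / 2 := by
    have h3 : t * (|M| + 1) ≤ (-L / (2 * (|M| + 1))) * (|M| + 1) :=
      mul_le_mul_of_nonneg_right h2 (le_of_lt hMpos)
    have h4 : (-L / (2 * (|M| + 1))) * (|M| + 1) = -L / 2 := by
      field_simp
    linarith
  have h5 := h t htpos ht1
  have h6 : t ^ 2 * M ≤ t * (t * (|M| + 1)) := by
    have : M ≤ |M| + 1 := by
      have := le_abs_self M; linarith
    nlinarith [sq_nonneg t]
  nlinarith

/-- A sum of functions differing only at one index. -/
lemma sum_single_diff (f g : U → ℝ) (m : U) (h : ∀ k, k ≠ m → f k = g k) :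
    ∑ k : U, f k = (∑ k : U, g k) + (f m - g m) := by
  have h1 : ∑ k : U, (f k - g k) = f m - g m := by
    rw [Finset.sum_eq_single m]
    · intro k _ hk
      rw [h k hk]; ring
    · intro hm; exact absurd (Finset.mem_univ m) hm
  have h2 : ∑ k : U, (f k - g k) = (∑ k : U, f k) - ∑ k : U, g k :=
    Finset.sum_sub_distrib f g
  linarith

/-- First-order variational inequality at an optimum, in a single coordinate,
in the direction of another feasible point. -/
lemma varIneq (c b D pbar : U → ℝ) (wplus wminus a w0 : ℝ)
    (p pp pm x q qp qm y : U → ℝ)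
    (hopt : IsOptimal c b D pbar wplus wminus a w0 p pp pm x)
    (hf2 : Feasible D pbar q qp qm y) (m : U) :
    0 ≤ (c m * p m + b m) * (q m - p m) + wplus * (qp m - pp m)
      - wminus * (qm m - pm m)
      + (a * x m + a * (∑ k : U, x k) - w0) * (y m - x m) := by
  classical
  obtain ⟨hf1, hmin⟩ := hopt
  apply lin_of_quad _ (c m / 2 * (q m - p m) ^ 2 + a * (y m - x m) ^ 2)
  intro t ht0 ht1
  set pt : U → ℝ := fun k => p k + t * (if k = m then q m - p m else 0) with hptdef
  set ppt : U → ℝ := fun k => pp k + t * (if k = m then qp m - pp m else 0) with hpptdef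
  set pmt : U → ℝ := fun k => pm k + t * (if k = m then qm m - pm m else 0) with hpmtdef
  set xt : U → ℝ := fun k => x k + t * (if k = m then y m - x m else 0) with hxtdef
  have hfeas : Feasible D pbar pt ppt pmt xt := by
    intro k
    obtain ⟨e1, e2, e3, e4, e5⟩ := hf1 k
    by_cases hk : k = m
    · subst hk
      obtain ⟨f1, f2, f3, f4, f5⟩ := hf2 k
      simp only [hptdef, hpptdef, hpmtdef, hxtdef, if_pos rfl, eq_self_iff_true,
        if_true, ite_true]
      refine ⟨by linear_combination (1 - t) * e1 + t * f1,
        by nlinarith, by nlinarith, by nlinarith, by nlinarith⟩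
    · simp only [hptdef, hpptdef, hpmtdef, hxtdef, if_neg hk, mul_zero, add_zero]
      exact ⟨e1, e2, e3, e4, e5⟩
  have hle := hmin pt ppt pmt xt hfeas
  have hxm : ∀ k, k ≠ m → xt k = x k := by
    intro k hk; simp [hxtdef, if_neg hk]
  have hsum : ∑ k : U, xt k = (∑ k : U, x k) + t * (y m - x m) := by
    have := sum_single_diff xt x m hxm
    rw [this]
    simp [hxtdef]
  have hsumsq : ∑ k : U, (xt k) ^ 2
      = (∑ k : U, (x k) ^ 2)
        + ((x m + t * (y m - x m)) ^ 2 - (x m) ^ 2) := by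
    have := sum_single_diff (fun k => (xt k) ^ 2) (fun k => (x k) ^ 2) m
      (by intro k hk; simp [hxm k hk])
    rw [this]
    simp [hxtdef]
  have hbig : ∑ k : U, (c k / 2 * (pt k) ^ 2 + b k * pt k + wplus * ppt k
        - wminus * pmt k - w0 * xt k)
      = (∑ k : U, (c k / 2 * (p k) ^ 2 + b k * p k + wplus * pp k
          - wminus * pm k - w0 * x k))
        + ((c m / 2 * (p m + t * (q m - p m)) ^ 2
            + b m * (p m + t * (q m - p m))
            + wplus * (pp m + t * (qp m - pp m))
            - wminus * (pm m + t * (qm m - pm m))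
            - w0 * (x m + t * (y m - x m)))
          - (c m / 2 * (p m) ^ 2 + b m * p m + wplus * pp m
            - wminus * pm m - w0 * x m)) := by
    have := sum_single_diff
      (fun k => c k / 2 * (pt k) ^ 2 + b k * pt k + wplus * ppt k
        - wminus * pmt k - w0 * xt k)
      (fun k => c k / 2 * (p k) ^ 2 + b k * p k + wplus * pp k
        - wminus * pm k - w0 * x k) m
      (by
        intro k hk
        simp [hptdef, hpptdef, hpmtdef, hxtdef, if_neg hk])
    rw [this]
    simp [hptdef, hpptdef, hpmtdef, hxtdef]
  have hobj : Objective c b wplus wminus a w0 pt ppt pmt xt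
      = Objective c b wplus wminus a w0 p pp pm x
        + (t * ((c m * p m + b m) * (q m - p m) + wplus * (qp m - pp m)
            - wminus * (qm m - pm m)
            + (a * x m + a * (∑ k : U, x k) - w0) * (y m - x m))
          + t ^ 2 * (c m / 2 * (q m - p m) ^ 2 + a * (y m - x m) ^ 2)) := by
    unfold Objective
    rw [hbig, hsumsq, hsum]
    ring
  linarith [hle, hobj.ge, hobj.le]

/-- each `x_m*(w⁰)` and the aggregate `X(w⁰)` are monotone
nondecreasing in the base price. -/
theorem lesm_shared_energy_monotone [Nonempty U]
    (c b D pbar : U → ℝ) (wplus wminus a : ℝ)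
    (hc : ∀ m, 0 < c m) (hpbar : ∀ m, 0 ≤ pbar m)
    (hb : ∀ m, 0 < b m) (hbw : ∀ m, b m < wminus)
    (hw : wminus < wplus) (ha : 0 < a)
    (pstar ppstar pmstar xstar : ℝ → U → ℝ)
    (hopt : ∀ w0 : ℝ, IsOptimal c b D pbar wplus wminus a w0
      (pstar w0) (ppstar w0) (pmstar w0) (xstar w0)) :
    ∀ w1 w2 : ℝ, w1 ≤ w2 →
      (∀ m : U, xstar w1 m ≤ xstar w2 m) ∧
      (∑ m : U, xstar w1 m) ≤ (∑ m : U, xstar w2 m) := by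
  intro w1 w2 hw12
  set d : U → ℝ := fun m => xstar w1 m - xstar w2 m with hd
  set S1 : ℝ := ∑ k : U, xstar w1 k with hS1
  set S2 : ℝ := ∑ k : U, xstar w2 k with hS2
  set κ : ℝ := a * (S1 - S2) + (w2 - w1) with hκ
  have key : ∀ m : U, a * (d m) ^ 2 + κ * d m ≤ 0 := by
    intro m
    have h1 := varIneq c b D pbar wplus wminus a w1
      (pstar w1) (ppstar w1) (pmstar w1) (xstar w1)
      (pstar w2) (ppstar w2) (pmstar w2) (xstar w2)
      (hopt w1) (hopt w2).1 m
    have h2 := varIneq c b D pbar wplus wminus a w2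
      (pstar w2) (ppstar w2) (pmstar w2) (xstar w2)
      (pstar w1) (ppstar w1) (pmstar w1) (xstar w1)
      (hopt w2) (hopt w1).1 m
    have hcm := hc m
    simp only [hd, hκ, hS1, hS2]
    nlinarith [sq_nonneg (pstar w1 m - pstar w2 m)]
  have hSd : S1 - S2 = ∑ m : U, d m := by
    simp [hd, hS1, hS2, Finset.sum_sub_distrib]
  have hκ0 : 0 ≤ κ := by
    by_contra hκneg
    push_neg at hκneg
    have hdpos : ∀ m : U, 0 ≤ d m := by
      intro m
      by_contra hdm
      push_neg at hdm
      have := key m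
      nlinarith [mul_pos (neg_pos.2 hκneg) (neg_pos.2 hdm), sq_nonneg (d m)]
    have hsum : 0 ≤ ∑ m : U, d m := Finset.sum_nonneg (fun m _ => hdpos m)
    have : 0 ≤ S1 - S2 := hSd ▸ hsum
    have : 0 ≤ κ := by rw [hκ]; nlinarith
    linarith
  have hdle : ∀ m : U, d m ≤ 0 := by
    intro m
    by_contra hdm
    push_neg at hdm
    have := key m
    nlinarith [mul_nonneg hκ0 (le_of_lt hdm), mul_pos ha (mul_pos hdm hdm)]
  constructor
  · intro m
    have := hdle m
    simp only [hd] at this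
    linarith
  · apply Finset.sum_le_sum
    intro m _
    have := hdle m
    simp only [hd] at this
    linarith
end

section
/- If the base price satisfies (w⁰ − w⁻)/(a·(1 + n)) ≤ min over m ∈ U of min(α_m, γ_m), then at the unique optimal solution of the L-ESM subproblem every prosumer operates in Mode 3: for all m ∈ U, x_m* = (w⁰ − w⁻)/(a·(1 + n)), p_m* = min(p̄_m, (w⁻ − b_m)/c_m), p_m⁺* = 0, p_m⁻* = p_m* − D_m − x_m*, and the aggregate satisfies X = (n/(1 + n))·(w⁰ − w⁻)/a. -/
open Finset

variable {U : Type*} [Fintype U]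

/-- Rewriting the objective at a feasible point by eliminating `pm`. -/
lemma objective_eq (c b D pbar : U → ℝ) (wplus wminus a w0 : ℝ)
    (q qp qm y : U → ℝ) (hf : Feasible D pbar q qp qm y) :
    Objective c b wplus wminus a w0 q qp qm y =
      (∑ m : U, (c m / 2 * (q m) ^ 2 + (b m - wminus) * q m
        + (wplus - wminus) * qp m + wminus * D m + (wminus - w0) * y m))
      + a / 2 * ∑ m : U, (y m) ^ 2 + a / 2 * (∑ m : U, y m) ^ 2 := by
  unfold Objective
  congr 2
  apply Finset.sum_congr rfl
  intro m _
  have hm : qm m = q m + qp m - D m - y m := by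
    have := (hf m).1; linarith
  rw [hm]; ring

set_option maxHeartbeats 1000000 in
/-- if `(w⁰ − w⁻)/(a(1+n)) ≤ min_m min(α_m, γ_m)`, then at the
optimal solution every prosumer is in Mode 3, with the explicit values given
in Lemma 4, and `X = (n/(1+n))·(w⁰ − w⁻)/a`. -/
theorem lesm_all_mode3_low_price [Nonempty U]
    (c b D pbar : U → ℝ) (wplus wminus a w0 : ℝ)
    (hc : ∀ m, 0 < c m) (hpbar : ∀ m, 0 ≤ pbar m)
    (hb : ∀ m, 0 < b m) (hbw : ∀ m, b m < wminus)
    (hw : wminus < wplus) (ha : 0 < a)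
    (hcond : ∀ m : U, (w0 - wminus) / (a * (1 + (Fintype.card U : ℝ))) ≤
      min ((wminus - b m) / c m - D m) (pbar m - D m))
    (p pp pm x : U → ℝ)
    (hopt : IsOptimal c b D pbar wplus wminus a w0 p pp pm x) :
    (∀ m : U,
      x m = (w0 - wminus) / (a * (1 + (Fintype.card U : ℝ))) ∧
      p m = min (pbar m) ((wminus - b m) / c m) ∧
      pp m = 0 ∧
      pm m = p m - D m - x m) ∧
    (∑ m : U, x m) =
      ((Fintype.card U : ℝ) / (1 + (Fintype.card U : ℝ))) * ((w0 - wminus) / a) := by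
  obtain ⟨hfeas, hmin⟩ := hopt
  set n : ℝ := (Fintype.card U : ℝ) with hn
  have hn0 : (0:ℝ) ≤ n := Nat.cast_nonneg _
  have hden : 0 < a * (1 + n) := by positivity
  set t : ℝ := (w0 - wminus) / (a * (1 + n)) with ht
  have htkey : a * (1 + n) * t = w0 - wminus := by
    rw [ht]; field_simp
  set ps : U → ℝ := fun m => min (pbar m) ((wminus - b m) / c m) with hps
  have hps_le : ∀ m, t + D m ≤ ps m := by
    intro m
    rcases le_min_iff.mp (hcond m) with ⟨h1, h2⟩
    simp only [hps, le_min_iff]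
    constructor <;> linarith
  have hps_nonneg : ∀ m, 0 ≤ ps m := by
    intro m
    have h2 : 0 ≤ (wminus - b m) / c m :=
      div_nonneg (by linarith [hbw m, hb m]) (hc m).le
    exact le_min (hpbar m) h2
  have hfeas' : Feasible D pbar ps (fun _ => 0) (fun m => ps m - D m - t)
      (fun _ => t) := by
    intro m
    refine ⟨by ring, hps_nonneg m, min_le_left _ _, le_refl _, ?_⟩
    show (0:ℝ) ≤ ps m - D m - t
    linarith [hps_le m]
  have hle := hmin _ _ _ _ hfeas'
  rw [objective_eq c b D pbar wplus wminus a w0 p pp pm x hfeas,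
    objective_eq c b D pbar wplus wminus a w0 ps _ _ _ hfeas'] at hle
  set S : ℝ := ∑ m : U, x m with hS
  have hsum_t : (∑ _m : U, t) = n * t := by
    rw [Finset.sum_const, Finset.card_univ, nsmul_eq_mul]
  have hsum_t2 : (∑ _m : U, t ^ 2) = n * t ^ 2 := by
    rw [Finset.sum_const, Finset.card_univ, nsmul_eq_mul]
  have hx2 : (∑ m : U, (x m - t) ^ 2)
      = (∑ m : U, (x m) ^ 2) - 2 * t * S + n * t ^ 2 := by
    have h : ∀ m ∈ Finset.univ, (x m - t) ^ 2
        = (x m) ^ 2 - 2 * t * x m + t ^ 2 := fun m _ => by ring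
    rw [Finset.sum_congr rfl h, Finset.sum_add_distrib, Finset.sum_sub_distrib,
      ← Finset.mul_sum, Finset.sum_const, Finset.card_univ, nsmul_eq_mul, ← hS]
  set G : U → ℝ := fun m =>
    c m / 2 * (p m - ps m) ^ 2 + (c m * ps m + b m - wminus) * (p m - ps m)
      + (wplus - wminus) * pp m + a / 2 * (x m - t) ^ 2 with hG
  -- the sum of the per-prosumer gaps plus the aggregate gap is nonpositive
  have hGsum : (∑ m : U, G m) + a / 2 * (S - n * t) ^ 2 ≤ 0 := by
    have hsplit : (∑ m : U, G m) =
        (∑ m : U, (c m / 2 * (p m) ^ 2 + (b m - wminus) * p m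
          + (wplus - wminus) * pp m + wminus * D m + (wminus - w0) * x m))
        - (∑ m : U, (c m / 2 * (ps m) ^ 2 + (b m - wminus) * ps m
          + (wplus - wminus) * (0:ℝ) + wminus * D m + (wminus - w0) * t))
        - (wminus - w0) * (S - n * t)
        + a / 2 * ((∑ m : U, (x m) ^ 2) - 2 * t * S + n * t ^ 2) := by
      rw [← hx2, ← Finset.sum_sub_distrib]
      have hst : (wminus - w0) * (S - n * t)
          = ∑ m : U, (wminus - w0) * (x m - t) := by
        rw [← Finset.mul_sum, Finset.sum_sub_distrib, ← hS, Finset.sum_const,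
          Finset.card_univ, nsmul_eq_mul]
      rw [hst, ← Finset.sum_sub_distrib, Finset.mul_sum, ← Finset.sum_add_distrib]
      apply Finset.sum_congr rfl
      intro m _
      rw [hG]; ring
    rw [hsum_t, hsum_t2] at hle
    rw [hsplit]
    have hle' := sub_nonpos.mpr hle
    have hcancel :
        ((∑ m : U, (c m / 2 * (p m) ^ 2 + (b m - wminus) * p m
          + (wplus - wminus) * pp m + wminus * D m + (wminus - w0) * x m))
        - (∑ m : U, (c m / 2 * (ps m) ^ 2 + (b m - wminus) * ps m
          + (wplus - wminus) * (0:ℝ) + wminus * D m + (wminus - w0) * t))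
        - (wminus - w0) * (S - n * t)
        + a / 2 * ((∑ m : U, (x m) ^ 2) - 2 * t * S + n * t ^ 2))
        + a / 2 * (S - n * t) ^ 2
        =
        ((∑ m : U, (c m / 2 * (p m) ^ 2 + (b m - wminus) * p m
          + (wplus - wminus) * pp m + wminus * D m + (wminus - w0) * x m))
          + a / 2 * ∑ m : U, (x m) ^ 2 + a / 2 * S ^ 2)
        - ((∑ m : U, (c m / 2 * (ps m) ^ 2 + (b m - wminus) * ps m
          + (wplus - wminus) * (0:ℝ) + wminus * D m + (wminus - w0) * t))
          + a / 2 * (n * t ^ 2) + a / 2 * (n * t) ^ 2) := by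
      linear_combination (n * t - S) * htkey
    rw [hcancel]
    linarith
  -- sign of the linear term
  have hE : ∀ m : U, 0 ≤ (c m * ps m + b m - wminus) * (p m - ps m) := by
    intro m
    have hcne : c m ≠ 0 := (hc m).ne'
    rcases min_cases (pbar m) ((wminus - b m) / c m) with ⟨he, hle'⟩ | ⟨he, hle'⟩
    · have hps_eq : ps m = pbar m := by rw [hps]; exact he
      have h' : pbar m * c m ≤ wminus - b m := (le_div_iff₀ (hc m)).mp hle'
      have hfac : c m * pbar m + b m - wminus ≤ 0 := by nlinarith
      have hpd : p m - ps m ≤ 0 := by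
        have := (hfeas m).2.2.1
        rw [hps_eq]; linarith
      rw [hps_eq]
      nlinarith
    · have hps_eq : ps m = (wminus - b m) / c m := by rw [hps]; exact he
      have hz : c m * ps m + b m - wminus = 0 := by
        rw [hps_eq]; field_simp; ring
      rw [hz, zero_mul]
  have hGnonneg : ∀ m : U, 0 ≤ G m := by
    intro m
    have hcm := hc m
    have h1 : 0 ≤ c m / 2 * (p m - ps m) ^ 2 := by positivity
    have h3 : 0 ≤ (wplus - wminus) * pp m :=
      mul_nonneg (by linarith) (hfeas m).2.2.2.1
    have h4 : 0 ≤ a / 2 * (x m - t) ^ 2 := by positivity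
    have h2 := hE m
    rw [hG]; dsimp only; linarith
  have hsq : 0 ≤ a / 2 * (S - n * t) ^ 2 := by positivity
  have hsum0 : (∑ m : U, G m) = 0 := by
    have h1 : 0 ≤ ∑ m : U, G m := Finset.sum_nonneg fun m _ => hGnonneg m
    linarith
  have hGzero : ∀ m : U, G m = 0 := fun m =>
    (Finset.sum_eq_zero_iff_of_nonneg fun m _ => hGnonneg m).mp hsum0 m
      (Finset.mem_univ m)
  have hcomp : ∀ m : U, x m = t ∧ p m = ps m ∧ pp m = 0 ∧
      pm m = p m - D m - x m := by
    intro m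
    have hG0 := hGzero m
    rw [hG] at hG0
    dsimp only at hG0
    have hcm := hc m
    have h1 : 0 ≤ c m / 2 * (p m - ps m) ^ 2 := by positivity
    have h2 := hE m
    have h3 : 0 ≤ (wplus - wminus) * pp m :=
      mul_nonneg (by linarith) (hfeas m).2.2.2.1
    have h4 : 0 ≤ a / 2 * (x m - t) ^ 2 := by positivity
    have hq1 : c m / 2 * (p m - ps m) ^ 2 = 0 := by linarith
    have hq3 : (wplus - wminus) * pp m = 0 := by linarith
    have hq4 : a / 2 * (x m - t) ^ 2 = 0 := by linarith
    have hx_eq : x m = t := by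
      have hne : a / 2 ≠ 0 := by positivity
      have hsq0 : (x m - t) ^ 2 = 0 := (mul_eq_zero.mp hq4).resolve_left hne
      have := pow_eq_zero_iff (two_ne_zero) |>.mp hsq0
      linarith
    have hp_eq : p m = ps m := by
      have hne : c m / 2 ≠ 0 := by positivity
      have hsq0 : (p m - ps m) ^ 2 = 0 := (mul_eq_zero.mp hq1).resolve_left hne
      have := pow_eq_zero_iff (two_ne_zero) |>.mp hsq0
      linarith
    have hpp_eq : pp m = 0 := by
      have hwne : wplus - wminus ≠ 0 := by linarith
      exact (mul_eq_zero.mp hq3).resolve_left hwne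
    refine ⟨hx_eq, hp_eq, hpp_eq, ?_⟩
    have hbal := (hfeas m).1
    rw [hpp_eq] at hbal
    linarith
  constructor
  · intro m
    obtain ⟨hx_eq, hp_eq, hpp_eq, hpm_eq⟩ := hcomp m
    exact ⟨by rw [hx_eq, ht], by rw [hp_eq, hps], hpp_eq, hpm_eq⟩
  · have hSx : S = n * t := by
      rw [hS]
      rw [Finset.sum_congr rfl fun m _ => (hcomp m).1, Finset.sum_const,
        Finset.card_univ, nsmul_eq_mul]
    rw [hSx, ht]
    have h1n : (1 : ℝ) + n ≠ 0 := by positivity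
    have ha' : a ≠ 0 := ha.ne'
    field_simp
end

section
/- Let U be a finite set partitioned into three disjoint subsets Ω₁, Ω₂₃, Ω₄, let a > 0 and c_m > 0 for every m ∈ Ω₁, and let x' : U → ℝ and X' ∈ ℝ satisfy: X' = Σ_{m∈U} x'_m; (c_m + a)·x'_m + a·X' = 1 for every m ∈ Ω₁; a·x'_m + a·X' = 1 for every m ∈ Ω₂₃; and x'_m = 0 for every m ∈ Ω₄. Then: (i) (1 + Σ_{m∈Ω₁} a/(c_m + a) + |Ω₂₃|)·X' = Σ_{m∈Ω₁} 1/(c_m + a) + |Ω₂₃|/a; (ii) 0 ≤ X' and a·X' < 1; (iii) x'_m ≥ 0 for every m ∈ U, with x'_m > 0 whenever m ∈ Ω₁ ∪ Ω₂₃; and (iv) X' = 0 if and only if Ω₁ ∪ Ω₂₃ = ∅. -/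
open Finset

/-- the linear system satisfied by the derivatives `x'_m`, `X'`
of the optimal L-ESM solution with respect to the base price, on a linear
segment, where `Ω₁`, `Ω₂₃`, `Ω₄` partition the prosumers by mode. -/
theorem derivative_linear_system {U : Type*} [Fintype U] [DecidableEq U]
    (Ω1 Ω23 Ω4 : Finset U)
    (hd12 : Disjoint Ω1 Ω23) (hd14 : Disjoint Ω1 Ω4) (hd234 : Disjoint Ω23 Ω4)
    (hcover : Ω1 ∪ Ω23 ∪ Ω4 = Finset.univ)
    (a : ℝ) (ha : 0 < a) (c : U → ℝ) (hc : ∀ m ∈ Ω1, 0 < c m)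
    (x' : U → ℝ) (X' : ℝ)
    (hX : X' = ∑ m : U, x' m)
    (h1 : ∀ m ∈ Ω1, (c m + a) * x' m + a * X' = 1)
    (h23 : ∀ m ∈ Ω23, a * x' m + a * X' = 1)
    (h4 : ∀ m ∈ Ω4, x' m = 0) :
    (1 + ∑ m ∈ Ω1, a / (c m + a) + (Ω23.card : ℝ)) * X'
        = ∑ m ∈ Ω1, 1 / (c m + a) + (Ω23.card : ℝ) / a ∧
    (0 ≤ X' ∧ a * X' < 1) ∧
    (∀ m : U, 0 ≤ x' m) ∧
    (∀ m ∈ Ω1 ∪ Ω23, 0 < x' m) ∧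
    (X' = 0 ↔ Ω1 ∪ Ω23 = ∅) := by
  have hca : ∀ m ∈ Ω1, 0 < c m + a := fun m hm => by linarith [hc m hm]
  set S : ℝ := ∑ m ∈ Ω1, 1 / (c m + a) + (Ω23.card : ℝ) / a with hS
  have hsum1 : 0 ≤ ∑ m ∈ Ω1, 1 / (c m + a) :=
    Finset.sum_nonneg fun m hm => le_of_lt (div_pos one_pos (hca m hm))
  have hcda : 0 ≤ (Ω23.card : ℝ) / a := by positivity
  have hSnn : 0 ≤ S := by rw [hS]; linarith
  set t : ℝ := 1 - a * X' with ht
  have hx1 : ∀ m ∈ Ω1, x' m = t / (c m + a) := by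
    intro m hm
    rw [eq_div_iff (hca m hm).ne']
    have := h1 m hm
    rw [ht]; linarith
  have hx23 : ∀ m ∈ Ω23, x' m = t / a := by
    intro m hm
    rw [eq_div_iff ha.ne']
    have := h23 m hm
    rw [ht]; nlinarith
  have hdisj : Disjoint (Ω1 ∪ Ω23) Ω4 := Finset.disjoint_union_left.mpr ⟨hd14, hd234⟩
  have hsplit : X' = ∑ m ∈ Ω1, x' m + ∑ m ∈ Ω23, x' m + ∑ m ∈ Ω4, x' m := by
    rw [hX, ← hcover, Finset.sum_union hdisj, Finset.sum_union hd12]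
  have e1 : ∑ m ∈ Ω1, x' m = t * ∑ m ∈ Ω1, 1 / (c m + a) := by
    rw [Finset.mul_sum]
    exact Finset.sum_congr rfl fun m hm => by rw [hx1 m hm]; ring
  have e2 : ∑ m ∈ Ω23, x' m = (Ω23.card : ℝ) * (t / a) := by
    rw [Finset.sum_congr rfl hx23, Finset.sum_const, nsmul_eq_mul]
  have e4 : ∑ m ∈ Ω4, x' m = 0 := Finset.sum_eq_zero h4
  have hXtS : X' = t * S := by
    rw [hsplit, e1, e2, e4, hS]; field_simp; ring
  have hkey : t * (1 + a * S) = 1 := by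
    have h' : t + a * X' = 1 := by rw [ht]; ring
    calc t * (1 + a * S) = t + a * (t * S) := by ring
      _ = t + a * X' := by rw [hXtS]
      _ = 1 := h'
  have h1aS : (0:ℝ) < 1 + a * S := by nlinarith
  have htpos : 0 < t := by nlinarith
  have hXnn : 0 ≤ X' := by rw [hXtS]; exact mul_nonneg htpos.le hSnn
  have haX : a * X' < 1 := by rw [ht] at htpos; linarith
  have hxpos : ∀ m ∈ Ω1 ∪ Ω23, 0 < x' m := by
    intro m hm
    rcases Finset.mem_union.mp hm with hm1 | hm2
    · rw [hx1 m hm1]; exact div_pos htpos (hca m hm1)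
    · rw [hx23 m hm2]; exact div_pos htpos ha
  have hxnn : ∀ m : U, 0 ≤ x' m := by
    intro m
    have hmem : m ∈ Ω1 ∪ Ω23 ∪ Ω4 := hcover ▸ Finset.mem_univ m
    rcases Finset.mem_union.mp hmem with hm | hm4
    · exact (hxpos m hm).le
    · rw [h4 m hm4]
  refine ⟨?_, ⟨hXnn, haX⟩, hxnn, hxpos, ?_⟩
  · have esum : ∑ m ∈ Ω1, a / (c m + a) = a * ∑ m ∈ Ω1, 1 / (c m + a) := by
      rw [Finset.mul_sum]
      exact Finset.sum_congr rfl fun m hm => by ring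
    have hcard : a * ((Ω23.card : ℝ) / a) = (Ω23.card : ℝ) := by
      rw [mul_div_assoc', mul_comm, mul_div_assoc, div_self ha.ne', mul_one]
    have hfac : 1 + ∑ m ∈ Ω1, a / (c m + a) + (Ω23.card : ℝ) = 1 + a * S := by
      rw [esum, hS, mul_add, hcard]; ring
    rw [hfac, hXtS]
    calc (1 + a * S) * (t * S) = (t * (1 + a * S)) * S := by ring
      _ = S := by rw [hkey]; ring
  · constructor
    · intro h0
      have hS0 : S = 0 := by
        rw [hXtS] at h0
        rcases mul_eq_zero.mp h0 with h | h
        · exact absurd h htpos.ne'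
        · exact h
      have h1z : ∑ m ∈ Ω1, 1 / (c m + a) = 0 := by
        rw [hS] at hS0; linarith
      have h23z : (Ω23.card : ℝ) / a = 0 := by rw [hS] at hS0; linarith
      have hΩ1 : Ω1 = ∅ := by
        by_contra hne
        obtain ⟨m, hm⟩ := Finset.nonempty_of_ne_empty hne
        have := (Finset.sum_eq_zero_iff_of_nonneg
          (fun m hm => (div_pos one_pos (hca m hm)).le)).mp h1z m hm
        exact absurd this (div_pos one_pos (hca m hm)).ne'
      have hΩ23 : Ω23 = ∅ := by
        field_simp at h23z
        simpa using h23z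
      rw [hΩ1, hΩ23, Finset.union_empty]
    · intro he
      have h1e : Ω1 = ∅ := Finset.union_eq_empty.mp he |>.1
      have h2e : Ω23 = ∅ := Finset.union_eq_empty.mp he |>.2
      have : S = 0 := by rw [hS, h1e, h2e]; simp
      rw [hXtS, this, mul_zero]
end
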